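/- arXiv:math/0108188 — 8 statements merged into one kernel-verified Lean document; each statement's English description precedes it below -/
import Mathlib

section
/- Let G be a topological group and W a nonempty topological space. Every weakly G-equivariant self-homeomorphism f of G × W (i.e., one for which there exists a continuous automorphism α of G with f(a·x,w) = ℓ(α(a))(f(x,w)) for all a,x,w) can be written uniquely in the form f(x,w) = (α(x)·(λ(h(w)))⁻¹, h(w)), where λ : W → G is a continuous map, α is a continuous automorphism of G, and h is a self-homeomorphism of W. -/
/-!
Applying the equivariance at `x = 1` shows `f (x, w) = (α x * (f (1, w)).1, (f (1, w)).2)`, so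
`f` is determined by `α` and its restriction to the slice `{1} × W`. Since `f⁻¹` is equivariant
for `α⁻¹`, the second coordinate `h w := (f (1, w)).2` is again a homeomorphism, with inverse
`w ↦ (f⁻¹ (1, w)).2`, and `λ := (f (1, h⁻¹ ·)).1⁻¹` is continuous. Uniqueness: evaluating at
`x = 1` recovers `h` and `λ`, and then `α` is recovered at any point of `W`.
-/

section WeaklyEquivariant

open Function

variable {G W : Type*}

def IsWeaklyEquivariant [Mul G] (α : G → G) (f : G × W → G × W) : Prop :=
  ∀ (a x : G) (w : W), f (a * x, w) = (α a * (f (x, w)).1, (f (x, w)).2)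

namespace IsWeaklyEquivariant

section MulOneClass

variable [MulOneClass G] {α : G → G} {f : G × W → G × W}

theorem apply_eq (hf : IsWeaklyEquivariant α f) (x : G) (w : W) :
    f (x, w) = (α x * (f (1, w)).1, (f (1, w)).2) := by
  simpa using hf x 1 w

theorem snd_apply (hf : IsWeaklyEquivariant α f) (x : G) (w : W) :
    (f (x, w)).2 = (f (1, w)).2 := by
  rw [hf.apply_eq]

end MulOneClass

theorem symm [Mul G] {α : G ≃ G} {f : G × W ≃ G × W} (hf : IsWeaklyEquivariant α f) :
    IsWeaklyEquivariant α.symm f.symm := by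
  intro b y w
  apply f.injective
  rw [f.apply_symm_apply, hf, Prod.mk.eta, f.apply_symm_apply, α.apply_symm_apply]

variable [MulOneClass G] [TopologicalSpace G] [TopologicalSpace W]
  {α : G ≃ G} {f : G × W ≃ₜ G × W}

def baseHomeomorph (hf : IsWeaklyEquivariant α f) : W ≃ₜ W where
  toFun w := (f (1, w)).2
  invFun w := (f.symm (1, w)).2
  left_inv w := by
    have hf_symm : IsWeaklyEquivariant α.symm f.symm := hf.symm (f := f.toEquiv)
    dsimp only
    rw [← hf_symm.snd_apply (f (1, w)).1, Prod.mk.eta, f.symm_apply_apply]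
  right_inv w := by
    dsimp only
    rw [← hf.snd_apply (f.symm (1, w)).1, Prod.mk.eta, f.apply_symm_apply]
  continuous_toFun := (f.continuous.comp (continuous_const.prodMk continuous_id)).snd
  continuous_invFun := (f.symm.continuous.comp (continuous_const.prodMk continuous_id)).snd

theorem baseHomeomorph_apply (hf : IsWeaklyEquivariant α f) (w : W) :
    hf.baseHomeomorph w = (f (1, w)).2 :=
  rfl

end IsWeaklyEquivariant

theorem IsWeaklyEquivariant.exists_normal_form [Group G] [TopologicalSpace G] [ContinuousInv G]
    [TopologicalSpace W] {α : G ≃ G} {f : G × W ≃ₜ G × W} (hf : IsWeaklyEquivariant α f) :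
    ∃ (lam : W → G) (h : W ≃ₜ W),
      Continuous lam ∧ ∀ (x : G) (w : W), f (x, w) = (α x * (lam (h w))⁻¹, h w) := by
  set h := hf.baseHomeomorph
  refine ⟨fun v => (f (1, h.symm v)).1⁻¹, h, ?_, fun x w => ?_⟩
  · exact ((f.continuous.comp (continuous_const.prodMk h.symm.continuous)).fst).inv
  · beta_reduce
    rw [h.symm_apply_apply, inv_inv, hf.baseHomeomorph_apply]
    exact hf.apply_eq x w

theorem eq_of_normal_form_eq [Group G] [Nonempty W] {α α' : G → G} {lam lam' : W → G}
    {h h' : W → W} (hα : α 1 = 1) (hα' : α' 1 = 1) (hh : Surjective h)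
    (heq : ∀ (x : G) (w : W), (α x * (lam (h w))⁻¹, h w) = (α' x * (lam' (h' w))⁻¹, h' w)) :
    lam = lam' ∧ α = α' ∧ h = h' := by
  have h_eq : h = h' := funext fun w => congrArg Prod.snd (heq 1 w)
  subst h_eq
  have lam_eq : lam = lam' := funext fun v => by
    obtain ⟨w, rfl⟩ := hh v
    simpa [hα, hα'] using congrArg Prod.fst (heq 1 w)
  subst lam_eq
  obtain ⟨w⟩ := ‹Nonempty W›
  exact ⟨rfl, funext fun x => mul_right_cancel (congrArg Prod.fst (heq x w)), rfl⟩

end WeaklyEquivariant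

/-- Every weakly `G`-equivariant self-homeomorphism `f` of `G × W` (one for which
there is a continuous automorphism `α` of `G` with
`f (a * x, w) = ℓ (α a) (f (x, w))`) can be written uniquely in the form
`f (x, w) = (α x * (λ (h w))⁻¹, h w)` with `λ : W → G` continuous, `α` a
continuous automorphism of `G`, and `h` a self-homeomorphism of `W`. -/
theorem weakly_equivariant_normal_form
    {G W : Type*} [Group G] [TopologicalSpace G] [IsTopologicalGroup G]
    [TopologicalSpace W] [Nonempty W] (f : (G × W) ≃ₜ (G × W))
    (hweak : ∃ α : G ≃ₜ G, (∀ x y : G, α (x * y) = α x * α y) ∧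
      ∀ (a x : G) (w : W), f (a * x, w) = (α a * (f (x, w)).1, (f (x, w)).2)) :
    ∃ (lam : W → G) (α : G ≃ₜ G) (h : W ≃ₜ W),
      Continuous lam ∧ (∀ x y : G, α (x * y) = α x * α y) ∧
      (∀ (x : G) (w : W), f (x, w) = (α x * (lam (h w))⁻¹, h w)) ∧
      ∀ (lam' : W → G) (α' : G ≃ₜ G) (h' : W ≃ₜ W),
        Continuous lam' → (∀ x y : G, α' (x * y) = α' x * α' y) →
        (∀ (x : G) (w : W), f (x, w) = (α' x * (lam' (h' w))⁻¹, h' w)) →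
        lam' = lam ∧ α' = α ∧ h' = h := by
  obtain ⟨α, hmul, hf⟩ := hweak
  obtain ⟨lam, h, hlam, hform⟩ := IsWeaklyEquivariant.exists_normal_form (α := α.toEquiv) hf
  refine ⟨lam, α, h, hlam, hmul, hform, fun lam' α' h' _ hmul' hform' => ?_⟩
  obtain ⟨hlam_eq, hα_eq, hh_eq⟩ := eq_of_normal_form_eq (α := α) (α' := α')
    (map_one (MonoidHom.mk' α hmul)) (map_one (MonoidHom.mk' α' hmul')) h.surjective
    fun x w => (hform x w).symm.trans (hform' x w)
  exact ⟨hlam_eq.symm, Homeomorph.ext (congrFun hα_eq.symm),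
    Homeomorph.ext (congrFun hh_eq.symm)⟩
end

section
/- Let G be a topological group and W a topological space. For a continuous map λ : W → G, a continuous automorphism α of G, and a self-homeomorphism h of W, let Θ(λ,α,h) denote the self-homeomorphism of G × W given by (x,w) ↦ (α(x)·(λ(h(w)))⁻¹, h(w)). Then Θ(λ₁,α₁,h₁) ∘ Θ(λ₂,α₂,h₂) = Θ(λ₁·(α₁∘λ₂∘h₁⁻¹), α₁∘α₂, h₁∘h₂), where (λ·λ')(w) = λ(w)·λ'(w) denotes the pointwise product. (This identity exhibits the group of weakly G-equivariant homeomorphisms of G × W as the semidirect product M(W,G) ⋊ (Aut(G) × TOP(W)).) -/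
/-- The weakly `G`-equivariant self-homeomorphism `Θ(λ, α, h)` of `G × W`
determined by a map `λ : W → G`, an automorphism `α` of `G`, and a
self-homeomorphism `h` of `W`: `(x, w) ↦ (α x * (λ (h w))⁻¹, h w)`. -/
def seifertTheta {G W : Type*} [Group G] [TopologicalSpace G] [TopologicalSpace W]
    (lam : W → G) (α : G ≃ₜ G) (h : W ≃ₜ W) : G × W → G × W :=
  fun p => (α p.1 * (lam (h p.2))⁻¹, h p.2)

theorem seifertTheta_comp_general
    {G W : Type*} [Group G] [TopologicalSpace G]
    [TopologicalSpace W]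
    (lam₁ lam₂ : W → G)
    (α₁ α₂ : G ≃ₜ G) (hα₁ : ∀ x y : G, α₁ (x * y) = α₁ x * α₁ y)
    (h₁ h₂ : W ≃ₜ W) :
    seifertTheta lam₁ α₁ h₁ ∘ seifertTheta lam₂ α₂ h₂ =
      seifertTheta (fun w => lam₁ w * α₁ (lam₂ (h₁.symm w)))
        (α₂.trans α₁) (h₂.trans h₁) := by
  let φ : G ≃* G := MulEquiv.mk' α₁.toEquiv hα₁
  have hφ : ∀ x, φ x = α₁ x := fun _ => rfl
  funext ⟨x, w⟩
  ext
  · simp only [seifertTheta, Function.comp_apply, Homeomorph.trans_apply,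
      Homeomorph.symm_apply_apply, ← hφ, map_mul, map_inv, mul_inv_rev, mul_assoc]
  · rfl

/-- The composition law
`Θ(λ₁,α₁,h₁) ∘ Θ(λ₂,α₂,h₂) = Θ(λ₁·(α₁∘λ₂∘h₁⁻¹), α₁∘α₂, h₁∘h₂)`
exhibiting the group of weakly `G`-equivariant homeomorphisms of `G × W` as the
semidirect product `M(W,G) ⋊ (Aut(G) × TOP(W))`.  Here the product of maps
`W → G` is pointwise. -/
theorem seifertTheta_comp
    {G W : Type*} [Group G] [TopologicalSpace G] [IsTopologicalGroup G]
    [TopologicalSpace W]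
    (lam₁ lam₂ : W → G) (hlam₁ : Continuous lam₁) (hlam₂ : Continuous lam₂)
    (α₁ α₂ : G ≃ₜ G) (hα₁ : ∀ x y : G, α₁ (x * y) = α₁ x * α₁ y)
    (hα₂ : ∀ x y : G, α₂ (x * y) = α₂ x * α₂ y)
    (h₁ h₂ : W ≃ₜ W) :
    seifertTheta lam₁ α₁ h₁ ∘ seifertTheta lam₂ α₂ h₂ =
      seifertTheta (fun w => lam₁ w * α₁ (lam₂ (h₁.symm w)))
        (α₂.trans α₁) (h₂.trans h₁) :=
  seifertTheta_comp_general lam₁ lam₂ α₁ α₂ hα₁ h₁ h₂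
end

section
/- Let G and Q be groups, let φ̃ : Q → Aut(G) be a function, and let f and f' both be factor sets for (G,Q) with the same φ̃. Then the extensions G ×_{(f',φ̃)} Q and G ×_{(f,φ̃)} Q are congruent (i.e., there is a group isomorphism θ between them with θ(a,1) = (a,1) for all a ∈ G and with the Q-coordinate of θ(a,α) equal to α for all (a,α)) if and only if there exists a function λ : Q → Z(G) into the center of G with λ(1) = 1 such that f'(α,β) = λ(α)·φ̃(α)(λ(β))·λ(αβ)⁻¹·f(α,β) for all α,β ∈ Q. -/
/-- A pair `(φ̃, f)` with `φ̃ : Q → Aut G` a function and `f : Q × Q → G` is a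
*factor set* for `(G, Q)` if it satisfies
(3.1) `φ̃(α) ∘ φ̃(β) = μ(f(α,β)) ∘ φ̃(αβ)` (with `μ(g)` conjugation by `g`),
(3.2) `f(α,1) = 1 = f(1,β)`, and
(3.3) `f(α,β)·f(αβ,γ) = φ̃(α)(f(β,γ))·f(α,βγ)`. -/
def IsFactorSet {G Q : Type*} [Group G] [Group Q]
    (φ : Q → MulAut G) (f : Q × Q → G) : Prop :=
  (∀ (α β : Q) (x : G), φ α (φ β x) = f (α, β) * φ (α * β) x * (f (α, β))⁻¹) ∧
  (∀ α : Q, f (α, 1) = 1) ∧ (∀ β : Q, f (1, β) = 1) ∧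
  (∀ α β γ : Q, f (α, β) * f (α * β, γ) = φ α (f (β, γ)) * f (α, β * γ))

/-- The multiplication of the extension `G ×_{(f,φ̃)} Q`:
`(a, α)(b, β) = (a · φ̃(α)(b) · f(α,β), αβ)`. -/
def factorMul {G Q : Type*} [Group G] [Group Q]
    (φ : Q → MulAut G) (f : Q × Q → G) (p q : G × Q) : G × Q :=
  (p.1 * φ p.2 q.1 * f (p.2, q.2), p.2 * q.2)

/-- Let `f` and `f'` be factor sets for `(G, Q)` with the same `φ̃`.  The
extensions `G ×_{(f',φ̃)} Q` and `G ×_{(f,φ̃)} Q` are congruent (there is a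
group isomorphism between them with `θ(a,1) = (a,1)` and preserving the
`Q`-coordinate) if and only if there is a map `λ : Q → Z(G)` with `λ 1 = 1`
and `f'(α,β) = λ(α)·φ̃(α)(λ(β))·λ(αβ)⁻¹·f(α,β)` for all `α, β`. -/
theorem congruent_iff_differ_by_central_coboundary
    {G Q : Type*} [Group G] [Group Q] (φ : Q → MulAut G) (f f' : Q × Q → G)
    (hf : IsFactorSet φ f) (hf' : IsFactorSet φ f') :
    (∃ θ : G × Q ≃ G × Q,
      (∀ p q : G × Q, θ (factorMul φ f' p q) = factorMul φ f (θ p) (θ q)) ∧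
      (∀ a : G, θ (a, (1 : Q)) = (a, 1)) ∧
      (∀ p : G × Q, (θ p).2 = p.2)) ↔
    ∃ lam : Q → G, (∀ α : Q, lam α ∈ Subgroup.center G) ∧ lam 1 = 1 ∧
      ∀ α β : Q,
        f' (α, β) = lam α * φ α (lam β) * (lam (α * β))⁻¹ * f (α, β) := by
  obtain ⟨h31, h32a, h32b, h33⟩ := hf
  obtain ⟨h31', h32a', h32b', h33'⟩ := hf'
  have hφ1 : ∀ x : G, φ 1 x = x := by
    intro x
    have h := h31 1 1 x
    simp only [h32a, one_mul, mul_one, inv_one] at h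
    exact (φ 1).injective h
  constructor
  · rintro ⟨θ, hmul, hone, hsnd⟩
    refine ⟨fun α => (θ (1, α)).1, ?_, ?_, ?_⟩
    all_goals
      have hθ : ∀ α : Q, θ (1, α) = ((θ (1, α)).1, α) := fun α =>
        Prod.ext rfl (hsnd (1, α))
      have h2 : ∀ (a : G) (α : Q), θ (a, α) = (a * (θ (1, α)).1, α) := by
        intro a α
        have he : factorMul φ f' (a, 1) (1, α) = (a, α) := by
          simp [factorMul, h32b', hφ1]
        have := hmul (a, 1) (1, α)
        rw [he, hone, hθ] at this
        rw [this]
        simp [factorMul, h32b, hφ1]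
      have hcen : ∀ α : Q, (θ (1, α)).1 ∈ Subgroup.center G := by
        intro α
        rw [Subgroup.mem_center_iff]
        intro g
        have he : factorMul φ f' (1, α) ((φ α).symm g, 1) = (g, α) := by
          simp [factorMul, h32a']
        have := hmul (1, α) ((φ α).symm g, 1)
        rw [he, hone, hθ, h2] at this
        have h1 := congrArg Prod.fst this
        simpa [factorMul, h32a] using h1
    · exact hcen
    · have := hone 1
      exact congrArg Prod.fst this
    · intro α β
      have he : factorMul φ f' (1, α) (1, β) = (f' (α, β), α * β) := by
        simp [factorMul]
      have hth := hmul (1, α) (1, β)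
      rw [he, h2 (f' (α, β)) (α * β)] at hth
      have h1 := congrArg Prod.fst hth
      simp only [factorMul, hsnd] at h1
      have hc := Subgroup.mem_center_iff.mp (hcen (α * β))
      have hcom2 : f (α, β) * ((θ (1, α * β)).1)⁻¹
          = ((θ (1, α * β)).1)⁻¹ * f (α, β) := Commute.inv_right (hc (f (α, β)))
      have key : f' (α, β)
          = (θ (1, α)).1 * φ α (θ (1, β)).1 * f (α, β) * ((θ (1, α * β)).1)⁻¹ := by
        rw [← h1]; group
      rw [key, mul_assoc _ (f (α, β)) _, hcom2, ← mul_assoc]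
  · rintro ⟨lam, hc, hl1, hcob⟩
    have hcom : ∀ (α : Q) (g : G), g * lam α = lam α * g := fun α =>
      Subgroup.mem_center_iff.mp (hc α)
    refine ⟨⟨fun p => (p.1 * lam p.2, p.2), fun p => (p.1 * (lam p.2)⁻¹, p.2),
      fun p => by simp, fun p => by simp⟩, ?_, ?_, ?_⟩
    · rintro ⟨a, α⟩ ⟨b, β⟩
      simp only [factorMul, Equiv.coe_fn_mk, Prod.mk.injEq]
      refine ⟨?_, trivial⟩
      rw [hcob α β, map_mul]
      have h1 : ∀ g : G, g * φ α (lam β) = φ α (lam β) * g := by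
        intro g
        have := hcom β ((φ α).symm g)
        have := congrArg (φ α) this
        simpa [map_mul] using this
      have h2 : ∀ g : G, (lam (α * β))⁻¹ * g = g * (lam (α * β))⁻¹ := by
        intro g
        exact (Commute.inv_left ((hcom (α * β) g).symm)).eq
      calc a * φ α b * (lam α * φ α (lam β) * (lam (α * β))⁻¹ * f (α, β)) * lam (α * β)
          = a * φ α b * lam α * φ α (lam β) * ((lam (α * β))⁻¹ * f (α, β) * lam (α * β)) := by
            group
        _ = a * φ α b * lam α * φ α (lam β) * f (α, β) := by rw [h2 (f (α, β))]; group
        _ = a * lam α * φ α b * φ α (lam β) * f (α, β) := by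
            rw [mul_assoc a (φ α b) (lam α), hcom α (φ α b), ← mul_assoc]
        _ = a * lam α * (φ α b * φ α (lam β)) * f (α, β) := by group
    · intro a; simp [hl1]
    · intro p; rfl
end

section
/- Let G, Q, E', Q' be groups, let (φ̃, f) be a factor set for (G,Q), and let E = G ×_{(f,φ̃)} Q with projection pr(a,α) = α. Let p' : E' → Q' be a surjective group homomorphism, i : G → E' an injective group homomorphism with i(G) contained in ker p', θ̄ : Q → Q' a group homomorphism, and let C = { c ∈ ker p' : c·i(a) = i(a)·c for all a ∈ G } be the centralizer of i(G) in ker p'. Suppose ψ : E → E' is a group homomorphism such that (A) p'(ψ(a,α)) = θ̄(α) for all (a,α) ∈ E, and (B) for every x ∈ E and a ∈ G, writing x·(a,1)·x⁻¹ = (c,1), one has i(c) = ψ(x)·i(a)·ψ(x)⁻¹. Then there exists a group homomorphism θ : E → E' with θ(a,1) = i(a) for all a ∈ G and p' ∘ θ = θ̄ ∘ pr, if and only if there exists a function λ : Q → C such that i(f(α,β))·λ(αβ)⁻¹ = λ(α)⁻¹·(ψ(1,α)·λ(β)⁻¹·ψ(1,α)⁻¹)·ψ(f(α,β),1) for all α,β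 ∈ Q. -/
private lemma aux_inv_comm {M : Type*} [Group M] (l c : M) (h : l * c = c * l) :
    l⁻¹ * c = c * l⁻¹ := by
  calc l⁻¹ * c = l⁻¹ * (c * l) * l⁻¹ := by group
  _ = l⁻¹ * (l * c) * l⁻¹ := by rw [h]
  _ = c * l⁻¹ := by group

private lemma aux_conj_comm {M : Type*} [Group M] (U V A B : M)
    (hu : U * B = A * U) (hv : V * B = A * V) :
    V * U⁻¹ * A = A * (V * U⁻¹) := by
  have hA : A = U * B * U⁻¹ := by rw [hu]; group
  have h1 : U⁻¹ * A = B * U⁻¹ := by rw [hA]; group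
  calc V * U⁻¹ * A = V * (U⁻¹ * A) := by group
  _ = V * (B * U⁻¹) := by rw [h1]
  _ = (V * B) * U⁻¹ := by group
  _ = (A * V) * U⁻¹ := by rw [hv]
  _ = A * (V * U⁻¹) := by group

private lemma aux_cocycle {M : Type*} [Group M] (F U1 U2 U12 V1 V2 V12 W : M)
    (hu : U1 * U2 = F * U12) (hv : V1 * V2 = W * V12) :
    F * (V12 * U12⁻¹)⁻¹ = (V1 * U1⁻¹)⁻¹ * (V1 * (V2 * U2⁻¹)⁻¹ * V1⁻¹) * W := by
  have hW : W = V1 * V2 * V12⁻¹ := by rw [hv]; group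
  have hF : F = U1 * U2 * U12⁻¹ := by rw [hu]; group
  rw [hW, hF]; group

private lemma aux_hom {M : Type*} [Group M] (p1 c F L1 L2 L12 V1 V2 V12 W b : M)
    (hco : F * L12 = L1 * (V1 * L2 * V1⁻¹) * W)
    (hv : V1 * V2 = W * V12)
    (hconj : V1 * b = c * V1)
    (hcomm : L1 * c = c * L1) :
    p1 * c * F * L12 * V12 = (p1 * L1 * V1) * (b * L2 * V2) := by
  calc p1 * c * F * L12 * V12
      = p1 * c * (F * L12) * V12 := by group
    _ = p1 * c * (L1 * (V1 * L2 * V1⁻¹) * W) * V12 := by rw [hco]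
    _ = p1 * (c * L1) * (V1 * L2 * V1⁻¹) * (W * V12) := by group
    _ = p1 * (L1 * c) * (V1 * L2 * V1⁻¹) * (V1 * V2) := by rw [← hcomm, ← hv]
    _ = p1 * L1 * (c * V1) * (L2 * V2) := by group
    _ = p1 * L1 * (V1 * b) * (L2 * V2) := by rw [hconj]
    _ = (p1 * L1 * V1) * (b * L2 * V2) := by group

/-- Membership in the centralizer `C = C_{ker p'}(i(G))` of `i(G)` in the
kernel of `p'`. -/
def InCentralizer {G E' Q' : Type*} [Group G] [Group E'] [Group Q']
    (p' : E' →* Q') (i : G →* E') (c : E') : Prop :=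
  c ∈ p'.ker ∧ ∀ a : G, c * i a = i a * c

/-- Theorem 3.7.2 (1): given a half-commutative homomorphism `ψ` from
`E = G ×_{(f,φ̃)} Q` to `E'` — i.e. `ψ` is a homomorphism covering `θ̄ : Q → Q'`
(condition (A)) and compatible with conjugation on `G` (condition (B), stated
for any `x ∈ E` with two-sided inverse `y` and `x·(a,1)·y = (c,1)`) — there is
a homomorphism `θ : E → E'` with `θ(a,1) = i(a)` and `p' ∘ θ = θ̄ ∘ pr` if and
only if there is a map `λ : Q → C = C_{ker p'}(i(G))` satisfying the cocycle
condition
`i(f(α,β))·λ(αβ)⁻¹ = λ(α)⁻¹·(ψ(1,α)·λ(β)⁻¹·ψ(1,α)⁻¹)·ψ(f(α,β),1)`. -/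
theorem exists_lift_iff_exists_lambda
    {G Q E' Q' : Type*} [Group G] [Group Q] [Group E'] [Group Q']
    (φ : Q → MulAut G) (f : Q × Q → G) (hfs : IsFactorSet φ f)
    (p' : E' →* Q') (hp' : Function.Surjective p')
    (i : G →* E') (hi : Function.Injective i) (hiker : ∀ a : G, i a ∈ p'.ker)
    (θbar : Q →* Q') (ψ : G × Q → E')
    (hψ : ∀ p q : G × Q, ψ (factorMul φ f p q) = ψ p * ψ q)
    (hA : ∀ p : G × Q, p' (ψ p) = θbar p.2)
    (hB : ∀ x y : G × Q,
      factorMul φ f x y = ((1 : G), (1 : Q)) →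
      factorMul φ f y x = ((1 : G), (1 : Q)) →
      ∀ a c : G, factorMul φ f (factorMul φ f x (a, 1)) y = (c, 1) →
        i c = ψ x * i a * (ψ x)⁻¹) :
    (∃ θ : G × Q → E',
      (∀ p q : G × Q, θ (factorMul φ f p q) = θ p * θ q) ∧
      (∀ a : G, θ (a, (1 : Q)) = i a) ∧
      (∀ p : G × Q, p' (θ p) = θbar p.2)) ↔
    (∃ lam : Q → E', (∀ α : Q, InCentralizer p' i (lam α)) ∧
      ∀ α β : Q,
        i (f (α, β)) * (lam (α * β))⁻¹ =
          (lam α)⁻¹ * (ψ ((1 : G), α) * (lam β)⁻¹ * (ψ ((1 : G), α))⁻¹) *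
            ψ (f (α, β), (1 : Q))) := by
  obtain ⟨h31, h32, h33, h34⟩ := hfs
  have hf11 : f (1, 1) = 1 := h32 1
  -- f(α, α⁻¹) = φ α (f(α⁻¹, α))
  have hinv : ∀ α : Q, φ α (f (α⁻¹, α)) = f (α, α⁻¹) := by
    intro α
    have h := h34 α α⁻¹ α
    rw [mul_inv_cancel, inv_mul_cancel, h33, h32, mul_one, mul_one] at h
    exact h.symm
  -- ψ(1,1) = 1
  have hf11' : f (1 : Q × Q) = 1 := hf11
  have hfm11 : factorMul φ f ((1 : G), (1 : Q)) ((1 : G), (1 : Q)) = ((1 : G), (1 : Q)) := by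
    simp [factorMul, hf11, hf11']
  have hψ11 : ψ ((1 : G), (1 : Q)) = 1 := by
    have h := hψ ((1 : G), (1 : Q)) ((1 : G), (1 : Q))
    rw [hfm11] at h
    exact (left_eq_mul.mp h)
  -- conjugation: ψ(1,α) * i b = i (φ α b) * ψ(1,α)
  have hconj : ∀ (α : Q) (b : G),
      ψ ((1 : G), α) * i b = i (φ α b) * ψ ((1 : G), α) := by
    intro α b
    have hxy : factorMul φ f ((1 : G), α) ((f (α⁻¹, α))⁻¹, α⁻¹) = ((1 : G), (1 : Q)) := by
      simp [factorMul, map_inv, hinv α]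
    have hyx : factorMul φ f ((f (α⁻¹, α))⁻¹, α⁻¹) ((1 : G), α) = ((1 : G), (1 : Q)) := by
      simp [factorMul]
    have hc : factorMul φ f (factorMul φ f ((1 : G), α) (b, 1)) ((f (α⁻¹, α))⁻¹, α⁻¹)
        = (φ α b, 1) := by
      simp [factorMul, h32, map_inv, hinv α, mul_assoc]
    have h := hB ((1 : G), α) ((f (α⁻¹, α))⁻¹, α⁻¹) hxy hyx b (φ α b) hc
    rw [h]; group
  -- composition: ψ(1,α) * ψ(1,β) = ψ(f(α,β),1) * ψ(1,αβ)
  have hvcomp : ∀ α β : Q,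
      ψ ((1 : G), α) * ψ ((1 : G), β) = ψ (f (α, β), (1 : Q)) * ψ ((1 : G), α * β) := by
    intro α β
    have e1 := hψ ((1 : G), α) ((1 : G), β)
    have e2 := hψ (f (α, β), (1 : Q)) ((1 : G), α * β)
    have hfm1 : factorMul φ f ((1 : G), α) ((1 : G), β) = (f (α, β), α * β) := by
      simp [factorMul]
    have hfm2 : factorMul φ f (f (α, β), (1 : Q)) ((1 : G), α * β) = (f (α, β), α * β) := by
      simp [factorMul, h33]
    rw [hfm1] at e1
    rw [hfm2] at e2
    rw [← e1, ← e2]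
  constructor
  · rintro ⟨θ, hθmul, hθ1, hθp⟩
    -- θ conjugation
    have hθconj : ∀ (α : Q) (b : G),
        θ ((1 : G), α) * i b = i (φ α b) * θ ((1 : G), α) := by
      intro α b
      have e1 := hθmul ((1 : G), α) (b, (1 : Q))
      have e2 := hθmul (φ α b, (1 : Q)) ((1 : G), α)
      have hfm1 : factorMul φ f ((1 : G), α) (b, (1 : Q)) = (φ α b, α) := by
        simp [factorMul, h32]
      have hfm2 : factorMul φ f (φ α b, (1 : Q)) ((1 : G), α) = (φ α b, α) := by
        simp [factorMul, h33]
      rw [hfm1] at e1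
      rw [hfm2] at e2
      rw [← hθ1 b, ← e1, e2, hθ1]
    have hucomp : ∀ α β : Q,
        θ ((1 : G), α) * θ ((1 : G), β) = i (f (α, β)) * θ ((1 : G), α * β) := by
      intro α β
      have e1 := hθmul ((1 : G), α) ((1 : G), β)
      have e2 := hθmul (f (α, β), (1 : Q)) ((1 : G), α * β)
      have hfm1 : factorMul φ f ((1 : G), α) ((1 : G), β) = (f (α, β), α * β) := by
        simp [factorMul]
      have hfm2 : factorMul φ f (f (α, β), (1 : Q)) ((1 : G), α * β) = (f (α, β), α * β) := by
        simp [factorMul, h33]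
      rw [hfm1] at e1
      rw [hfm2] at e2
      rw [← e1, e2, hθ1]
    refine ⟨fun α => ψ ((1 : G), α) * (θ ((1 : G), α))⁻¹, ?_, ?_⟩
    · intro α
      constructor
      · rw [MonoidHom.mem_ker, map_mul, map_inv, hA ((1 : G), α), hθp ((1 : G), α),
          mul_inv_cancel]
      · intro a
        exact aux_conj_comm (θ ((1 : G), α)) (ψ ((1 : G), α)) (i a) (i ((φ α)⁻¹ a))
          (by have := hθconj α ((φ α)⁻¹ a); rwa [MulAut.apply_inv_self] at this)
          (by have := hconj α ((φ α)⁻¹ a); rwa [MulAut.apply_inv_self] at this)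
    · intro α β
      exact aux_cocycle (i (f (α, β))) (θ ((1 : G), α)) (θ ((1 : G), β)) (θ ((1 : G), α * β))
        (ψ ((1 : G), α)) (ψ ((1 : G), β)) (ψ ((1 : G), α * β)) (ψ (f (α, β), (1 : Q)))
        (hucomp α β) (hvcomp α β)
  · rintro ⟨lam, hC, hco⟩
    -- lam 1 = 1
    have hlam1 : lam 1 = 1 := by
      have h := hco 1 1
      rw [hf11, map_one, one_mul, mul_one, hψ11] at h
      simp only [one_mul, mul_one, inv_one] at h
      exact inv_eq_one.mp (left_eq_mul.mp h)
    refine ⟨fun p => i p.1 * (lam p.2)⁻¹ * ψ ((1 : G), p.2), ?_, ?_, ?_⟩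
    · rintro ⟨a, α⟩ ⟨b, β⟩
      show i (a * φ α b * f (α, β)) * (lam (α * β))⁻¹ * ψ ((1 : G), α * β) =
        (i a * (lam α)⁻¹ * ψ ((1 : G), α)) * (i b * (lam β)⁻¹ * ψ ((1 : G), β))
      rw [map_mul, map_mul]
      exact aux_hom (i a) (i (φ α b)) (i (f (α, β))) ((lam α)⁻¹) ((lam β)⁻¹)
        ((lam (α * β))⁻¹) (ψ ((1 : G), α)) (ψ ((1 : G), β)) (ψ ((1 : G), α * β))
        (ψ (f (α, β), (1 : Q))) (i b) (hco α β) (hvcomp α β) (hconj α b)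
        (aux_inv_comm (lam α) (i (φ α b)) ((hC α).2 (φ α b)))
    · intro a
      show i a * (lam 1)⁻¹ * ψ ((1 : G), (1 : Q)) = i a
      rw [hlam1, hψ11, inv_one, mul_one, mul_one]
    · intro p
      show p' (i p.1 * (lam p.2)⁻¹ * ψ ((1 : G), p.2)) = θbar p.2
      rw [map_mul, map_mul, map_inv, MonoidHom.mem_ker.mp (hiker p.1),
        MonoidHom.mem_ker.mp (hC p.2).1, hA ((1 : G), p.2)]
      simp
end

section
/- Let G, Q, E', Q' be groups, (φ̃, f) a factor set for (G,Q), E = G ×_{(f,φ̃)} Q with projection pr(a,α) = α, p' : E' → Q' a surjective group homomorphism, i : G → E' an injective group homomorphism with i(G) ⊆ ker p', θ̄ : Q → Q' a group homomorphism, and C = { c ∈ ker p' : c·i(a) = i(a)·c for all a ∈ G }. Say a homomorphism θ : E → E' fits the diagram if θ(a,1) = i(a) for all a ∈ G and p' ∘ θ = θ̄ ∘ pr. Suppose θ₀ : E → E' fits the diagram. Then: (1) for every x ∈ E, conjugation by θ₀(x) maps C into C, and for x = (a,1) this conjugation is the identity on C, so that α ↦ (c ↦ θ₀(1,α)·c·θ₀(1,α)⁻¹)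 defines an action φ'' of Q on C by automorphisms; (2) the assignment θ ↦ η, where θ(x) = η(pr(x))·θ₀(x) for all x ∈ E, is a bijection between the set of homomorphisms θ : E → E' fitting the diagram and the set of crossed homomorphisms η : Q → C, i.e., functions satisfying η(αβ) = η(α)·φ''(α)(η(β)) for all α,β ∈ Q; (3) for c ∈ C, the homomorphism x ↦ c·θ(x)·c⁻¹ also fits the diagram, and its crossed homomorphism is α ↦ c·η(α)·φ''(α)(c⁻¹). -/
/-- A map `θ : E = G ×_{(f,φ̃)} Q → E'` *fits the diagram* if it is a
homomorphism with `θ(a,1) = i(a)` and `p' ∘ θ = θ̄ ∘ pr`. -/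
def FitsDiagram {G Q E' Q' : Type*} [Group G] [Group Q] [Group E'] [Group Q']
    (φ : Q → MulAut G) (f : Q × Q → G) (p' : E' →* Q') (i : G →* E')
    (θbar : Q →* Q') (θ : G × Q → E') : Prop :=
  (∀ p q : G × Q, θ (factorMul φ f p q) = θ p * θ q) ∧
  (∀ a : G, θ (a, (1 : Q)) = i a) ∧
  (∀ p : G × Q, p' (θ p) = θbar p.2)

/-- Theorem 3.7.2 (2): classification of the homomorphisms fitting the diagram.
Given `θ₀` fitting the diagram:
(1) conjugation by `θ₀(x)` preserves `C = C_{ker p'}(i(G))`, is trivial for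
`x = (a,1)`, and `φ''(α)(c) = θ₀(1,α)·c·θ₀(1,α)⁻¹` is an action of `Q` on `C`;
(2) `θ ↦ η`, with `θ(x) = η(pr x)·θ₀(x)`, is a bijection between homomorphisms
fitting the diagram and crossed homomorphisms `η : Q → C`;
(3) conjugating a fitting `θ` by `c ∈ C` again fits the diagram, and its
crossed homomorphism is `α ↦ c·η(α)·φ''(α)(c⁻¹)`. -/
theorem fitting_homs_classified_by_crossed_homs
    {G Q E' Q' : Type*} [Group G] [Group Q] [Group E'] [Group Q']
    (φ : Q → MulAut G) (f : Q × Q → G) (hfs : IsFactorSet φ f)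
    (p' : E' →* Q') (hp' : Function.Surjective p')
    (i : G →* E') (hi : Function.Injective i) (hiker : ∀ a : G, i a ∈ p'.ker)
    (θbar : Q →* Q') (θ₀ : G × Q → E')
    (hθ₀ : FitsDiagram φ f p' i θbar θ₀) :
    -- (1)
    ((∀ (x : G × Q) (c : E'), InCentralizer p' i c →
        InCentralizer p' i (θ₀ x * c * (θ₀ x)⁻¹)) ∧
     (∀ (a : G) (c : E'), InCentralizer p' i c →
        θ₀ (a, (1 : Q)) * c * (θ₀ (a, (1 : Q)))⁻¹ = c) ∧
     (∀ (α β : Q) (c : E'), InCentralizer p' i c →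
        θ₀ ((1 : G), α * β) * c * (θ₀ ((1 : G), α * β))⁻¹ =
          θ₀ ((1 : G), α) * (θ₀ ((1 : G), β) * c * (θ₀ ((1 : G), β))⁻¹) *
            (θ₀ ((1 : G), α))⁻¹)) ∧
    -- (2)
    ((∀ θ : G × Q → E', FitsDiagram φ f p' i θbar θ →
        ∃! η : Q → E',
          (∀ α : Q, InCentralizer p' i (η α)) ∧
          (∀ α β : Q, η (α * β) =
            η α * (θ₀ ((1 : G), α) * η β * (θ₀ ((1 : G), α))⁻¹)) ∧
          (∀ x : G × Q, θ x = η x.2 * θ₀ x)) ∧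
     (∀ η : Q → E', (∀ α : Q, InCentralizer p' i (η α)) →
        (∀ α β : Q, η (α * β) =
          η α * (θ₀ ((1 : G), α) * η β * (θ₀ ((1 : G), α))⁻¹)) →
        FitsDiagram φ f p' i θbar (fun x : G × Q => η x.2 * θ₀ x))) ∧
    -- (3)
    (∀ (c : E'), InCentralizer p' i c →
      ∀ (θ : G × Q → E') (η : Q → E'), FitsDiagram φ f p' i θbar θ →
        (∀ α : Q, InCentralizer p' i (η α)) →
        (∀ α β : Q, η (α * β) =
          η α * (θ₀ ((1 : G), α) * η β * (θ₀ ((1 : G), α))⁻¹)) →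
        (∀ x : G × Q, θ x = η x.2 * θ₀ x) →
        FitsDiagram φ f p' i θbar (fun x : G × Q => c * θ x * c⁻¹) ∧
        (∀ x : G × Q, c * θ x * c⁻¹ =
          (c * η x.2 * (θ₀ ((1 : G), x.2) * c⁻¹ * (θ₀ ((1 : G), x.2))⁻¹)) *
            θ₀ x)) := by
  obtain ⟨_h31, h2a, h2b, _h33⟩ := hfs
  -- basic structural lemmas for any fitting homomorphism
  have hsplitθ : ∀ θ : G × Q → E', FitsDiagram φ f p' i θbar θ →
      ∀ p : G × Q, θ p = i p.1 * θ ((1 : G), p.2) := by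
    rintro θ ⟨hm, h1, _⟩ ⟨b, α⟩
    have e : factorMul φ f (b, (1 : Q)) ((1 : G), α) = (b, α) := by
      simp [factorMul, h2b]
    show θ (b, α) = i b * θ ((1 : G), α)
    rw [← e, hm, h1]
  have hconjθ : ∀ θ : G × Q → E', FitsDiagram φ f p' i θbar θ →
      ∀ (α : Q) (a : G), θ ((1 : G), α) * i a = i (φ α a) * θ ((1 : G), α) := by
    intro θ hθ α a
    have e : factorMul φ f ((1 : G), α) (a, (1 : Q)) = (φ α a, α) := by
      simp [factorMul, h2a]
    have h := hθ.1 ((1 : G), α) (a, (1 : Q))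
    rw [e, hθ.2.1] at h
    rw [← h]
    exact hsplitθ θ hθ (φ α a, α)
  have hcocθ : ∀ θ : G × Q → E', FitsDiagram φ f p' i θbar θ →
      ∀ α β : Q, θ ((1 : G), α) * θ ((1 : G), β)
        = i (f (α, β)) * θ ((1 : G), α * β) := by
    intro θ hθ α β
    have e : factorMul φ f ((1 : G), α) ((1 : G), β) = (f (α, β), α * β) := by
      simp [factorMul]
    have h := hθ.1 ((1 : G), α) ((1 : G), β)
    rw [e] at h
    rw [← h]
    exact hsplitθ θ hθ (f (α, β), α * β)
  have hconjinvθ : ∀ θ : G × Q → E', FitsDiagram φ f p' i θbar θ →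
      ∀ (α : Q) (a : G),
        (θ ((1 : G), α))⁻¹ * i a = i ((φ α).symm a) * (θ ((1 : G), α))⁻¹ := by
    intro θ hθ α a
    have h := hconjθ θ hθ α ((φ α).symm a)
    rw [(φ α).apply_symm_apply] at h
    rw [inv_mul_eq_iff_eq_mul, ← mul_assoc, h, mul_inv_cancel_right]
  -- C lemmas
  have Cmul : ∀ c d : E', InCentralizer p' i c → InCentralizer p' i d →
      InCentralizer p' i (c * d) := by
    rintro c d ⟨hc1, hc2⟩ ⟨hd1, hd2⟩
    refine ⟨mul_mem hc1 hd1, fun a => ?_⟩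
    rw [mul_assoc, hd2, ← mul_assoc, hc2, mul_assoc]
  have Cinv : ∀ c : E', InCentralizer p' i c → InCentralizer p' i c⁻¹ := by
    rintro c ⟨hc1, hc2⟩
    refine ⟨inv_mem hc1, fun a => ?_⟩
    have h : Commute c (i a) := hc2 a
    exact h.inv_left
  have Ctriv : ∀ c : E', InCentralizer p' i c → ∀ b : G,
      i b * c * (i b)⁻¹ = c := by
    rintro c ⟨_, hc2⟩ b
    rw [← hc2 b, mul_inv_cancel_right]
  have Ctriv' : ∀ c : E', InCentralizer p' i c → ∀ b : G,
      (i b)⁻¹ * c * i b = c := by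
    intro c hc b
    have h := Ctriv c hc b⁻¹
    rwa [map_inv, inv_inv] at h
  -- conjugation by θ₀(1,α) preserves C
  have conjC : ∀ (α : Q) (c : E'), InCentralizer p' i c →
      InCentralizer p' i (θ₀ ((1 : G), α) * c * (θ₀ ((1 : G), α))⁻¹) := by
    rintro α c hc
    obtain ⟨hc1, hc2⟩ := hc
    constructor
    · have hp1 : p' (θ₀ ((1 : G), α)) = θbar α := hθ₀.2.2 ((1 : G), α)
      have hpc : p' c = 1 := hc1
      simp [MonoidHom.mem_ker, hp1, hpc]
    · intro a
      have h := hconjθ θ₀ hθ₀ α ((φ α).symm a)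
      rw [(φ α).apply_symm_apply] at h
      have hinv := hconjinvθ θ₀ hθ₀ α a
      calc θ₀ ((1 : G), α) * c * (θ₀ ((1 : G), α))⁻¹ * i a
          = θ₀ ((1 : G), α) * c * ((θ₀ ((1 : G), α))⁻¹ * i a) := by group
        _ = θ₀ ((1 : G), α) * c * (i ((φ α).symm a) * (θ₀ ((1 : G), α))⁻¹) := by
            rw [hinv]
        _ = θ₀ ((1 : G), α) * (c * i ((φ α).symm a)) * (θ₀ ((1 : G), α))⁻¹ := by
            group
        _ = θ₀ ((1 : G), α) * (i ((φ α).symm a) * c) * (θ₀ ((1 : G), α))⁻¹ := by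
            rw [hc2]
        _ = (θ₀ ((1 : G), α) * i ((φ α).symm a)) * (c * (θ₀ ((1 : G), α))⁻¹) := by
            group
        _ = (i a * θ₀ ((1 : G), α)) * (c * (θ₀ ((1 : G), α))⁻¹) := by rw [h]
        _ = i a * (θ₀ ((1 : G), α) * c * (θ₀ ((1 : G), α))⁻¹) := by group
  have h1a : ∀ (x : G × Q) (c : E'), InCentralizer p' i c →
      InCentralizer p' i (θ₀ x * c * (θ₀ x)⁻¹) := by
    intro x c hc
    have hx := hsplitθ θ₀ hθ₀ x
    have e : θ₀ x * c * (θ₀ x)⁻¹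
        = i x.1 * (θ₀ ((1 : G), x.2) * c * (θ₀ ((1 : G), x.2))⁻¹) * (i x.1)⁻¹ := by
      rw [hx]; group
    rw [e, Ctriv _ (conjC _ _ hc) x.1]
    exact conjC _ _ hc
  refine ⟨⟨h1a, ?_, ?_⟩, ⟨?_, ?_⟩, ?_⟩
  · -- (1b)
    intro a c hc
    rw [hθ₀.2.1 a]
    exact Ctriv c hc a
  · -- (1c)
    intro α β c hc
    have hcoc := hcocθ θ₀ hθ₀ α β
    have ht : θ₀ ((1 : G), α * β)
        = (i (f (α, β)))⁻¹ * (θ₀ ((1 : G), α) * θ₀ ((1 : G), β)) := by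
      rw [hcoc, inv_mul_cancel_left]
    have hcαβ := conjC α _ (conjC β c hc)
    calc θ₀ ((1 : G), α * β) * c * (θ₀ ((1 : G), α * β))⁻¹
        = (i (f (α, β)))⁻¹ *
            (θ₀ ((1 : G), α) * (θ₀ ((1 : G), β) * c * (θ₀ ((1 : G), β))⁻¹) *
              (θ₀ ((1 : G), α))⁻¹) * i (f (α, β)) := by rw [ht]; group
      _ = _ := Ctriv' _ hcαβ (f (α, β))
  · -- (2) forward
    intro θ hθ
    refine ⟨fun α => θ ((1 : G), α) * (θ₀ ((1 : G), α))⁻¹, ⟨?_, ?_, ?_⟩, ?_⟩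
    · -- η α ∈ C
      intro α
      constructor
      · have hp1 : p' (θ ((1 : G), α)) = θbar α := hθ.2.2 ((1 : G), α)
        have hp2 : p' (θ₀ ((1 : G), α)) = θbar α := hθ₀.2.2 ((1 : G), α)
        simp [MonoidHom.mem_ker, hp1, hp2]
      · intro a
        have h := hconjθ θ hθ α ((φ α).symm a)
        rw [(φ α).apply_symm_apply] at h
        have hinv := hconjinvθ θ₀ hθ₀ α a
        calc θ ((1 : G), α) * (θ₀ ((1 : G), α))⁻¹ * i a
            = θ ((1 : G), α) * ((θ₀ ((1 : G), α))⁻¹ * i a) := by group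
          _ = θ ((1 : G), α) * (i ((φ α).symm a) * (θ₀ ((1 : G), α))⁻¹) := by
              rw [hinv]
          _ = (θ ((1 : G), α) * i ((φ α).symm a)) * (θ₀ ((1 : G), α))⁻¹ := by
              group
          _ = (i a * θ ((1 : G), α)) * (θ₀ ((1 : G), α))⁻¹ := by rw [h]
          _ = i a * (θ ((1 : G), α) * (θ₀ ((1 : G), α))⁻¹) := by group
    · -- crossed homomorphism
      intro α β
      have hη : ∀ γ : Q, InCentralizer p' i (θ ((1 : G), γ) * (θ₀ ((1 : G), γ))⁻¹) := by
        intro γ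
        constructor
        · have hp1 : p' (θ ((1 : G), γ)) = θbar γ := hθ.2.2 ((1 : G), γ)
          have hp2 : p' (θ₀ ((1 : G), γ)) = θbar γ := hθ₀.2.2 ((1 : G), γ)
          simp [MonoidHom.mem_ker, hp1, hp2]
        · intro a
          have h := hconjθ θ hθ γ ((φ γ).symm a)
          rw [(φ γ).apply_symm_apply] at h
          have hinv := hconjinvθ θ₀ hθ₀ γ a
          calc θ ((1 : G), γ) * (θ₀ ((1 : G), γ))⁻¹ * i a
              = θ ((1 : G), γ) * ((θ₀ ((1 : G), γ))⁻¹ * i a) := by group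
            _ = θ ((1 : G), γ) * (i ((φ γ).symm a) * (θ₀ ((1 : G), γ))⁻¹) := by
                rw [hinv]
            _ = (θ ((1 : G), γ) * i ((φ γ).symm a)) * (θ₀ ((1 : G), γ))⁻¹ := by
                group
            _ = (i a * θ ((1 : G), γ)) * (θ₀ ((1 : G), γ))⁻¹ := by rw [h]
            _ = i a * (θ ((1 : G), γ) * (θ₀ ((1 : G), γ))⁻¹) := by group
      have e1 : θ ((1 : G), α * β)
          = (i (f (α, β)))⁻¹ * (θ ((1 : G), α) * θ ((1 : G), β)) := by
        rw [hcocθ θ hθ α β, inv_mul_cancel_left]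
      have e2 : θ₀ ((1 : G), α * β)
          = (i (f (α, β)))⁻¹ * (θ₀ ((1 : G), α) * θ₀ ((1 : G), β)) := by
        rw [hcocθ θ₀ hθ₀ α β, inv_mul_cancel_left]
      have hmem := Cmul _ _ (hη α) (conjC α _ (hη β))
      calc θ ((1 : G), α * β) * (θ₀ ((1 : G), α * β))⁻¹
          = (i (f (α, β)))⁻¹ *
              ((θ ((1 : G), α) * (θ₀ ((1 : G), α))⁻¹) *
                (θ₀ ((1 : G), α) * (θ ((1 : G), β) * (θ₀ ((1 : G), β))⁻¹) *
                  (θ₀ ((1 : G), α))⁻¹)) * i (f (α, β)) := by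
            rw [e1, e2]; group
        _ = _ := Ctriv' _ hmem (f (α, β))
    · -- θ x = η x.2 * θ₀ x
      intro x
      have hη : InCentralizer p' i (θ ((1 : G), x.2) * (θ₀ ((1 : G), x.2))⁻¹) := by
        constructor
        · have hp1 : p' (θ ((1 : G), x.2)) = θbar x.2 := hθ.2.2 ((1 : G), x.2)
          have hp2 : p' (θ₀ ((1 : G), x.2)) = θbar x.2 := hθ₀.2.2 ((1 : G), x.2)
          simp [MonoidHom.mem_ker, hp1, hp2]
        · intro a
          have h := hconjθ θ hθ x.2 ((φ x.2).symm a)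
          rw [(φ x.2).apply_symm_apply] at h
          have hinv := hconjinvθ θ₀ hθ₀ x.2 a
          calc θ ((1 : G), x.2) * (θ₀ ((1 : G), x.2))⁻¹ * i a
              = θ ((1 : G), x.2) * ((θ₀ ((1 : G), x.2))⁻¹ * i a) := by group
            _ = θ ((1 : G), x.2) * (i ((φ x.2).symm a) * (θ₀ ((1 : G), x.2))⁻¹) := by
                rw [hinv]
            _ = (θ ((1 : G), x.2) * i ((φ x.2).symm a)) * (θ₀ ((1 : G), x.2))⁻¹ := by
                group
            _ = (i a * θ ((1 : G), x.2)) * (θ₀ ((1 : G), x.2))⁻¹ := by rw [h]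
            _ = i a * (θ ((1 : G), x.2) * (θ₀ ((1 : G), x.2))⁻¹) := by group
      calc θ x = i x.1 * θ ((1 : G), x.2) := hsplitθ θ hθ x
        _ = i x.1 * ((θ ((1 : G), x.2) * (θ₀ ((1 : G), x.2))⁻¹) * θ₀ ((1 : G), x.2)) := by
            group
        _ = (i x.1 * (θ ((1 : G), x.2) * (θ₀ ((1 : G), x.2))⁻¹)) * θ₀ ((1 : G), x.2) := by
            group
        _ = ((θ ((1 : G), x.2) * (θ₀ ((1 : G), x.2))⁻¹) * i x.1) * θ₀ ((1 : G), x.2) := by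
            rw [hη.2 x.1]
        _ = (θ ((1 : G), x.2) * (θ₀ ((1 : G), x.2))⁻¹) * (i x.1 * θ₀ ((1 : G), x.2)) := by
            group
        _ = (θ ((1 : G), x.2) * (θ₀ ((1 : G), x.2))⁻¹) * θ₀ x := by
            rw [← hsplitθ θ₀ hθ₀ x]
    · -- uniqueness
      rintro η' ⟨_, _, h3⟩
      funext α
      have h := h3 ((1 : G), α)
      rw [eq_comm, mul_inv_eq_iff_eq_mul]
      exact h
  · -- (2) reverse
    intro η hηC hηcr
    have hη1 : η 1 = 1 := by
      have h := hηcr 1 1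
      rw [one_mul] at h
      have h0 : θ₀ ((1 : G), (1 : Q)) = 1 := by rw [hθ₀.2.1 1, map_one]
      rw [h0] at h
      simp only [one_mul, inv_one, mul_one] at h
      exact left_eq_mul.mp h
    refine ⟨?_, ?_, ?_⟩
    · intro p q
      show η (factorMul φ f p q).2 * θ₀ (factorMul φ f p q)
          = (η p.2 * θ₀ p) * (η q.2 * θ₀ q)
      have h2 : (factorMul φ f p q).2 = p.2 * q.2 := rfl
      rw [h2, hθ₀.1 p q, hηcr p.2 q.2, hsplitθ θ₀ hθ₀ p]
      have hinv := hconjinvθ θ₀ hθ₀ p.2 p.1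
      have hts : θ₀ ((1 : G), p.2) * i ((φ p.2).symm p.1)
          = i p.1 * θ₀ ((1 : G), p.2) := by
        have h := hconjθ θ₀ hθ₀ p.2 ((φ p.2).symm p.1)
        rw [(φ p.2).apply_symm_apply] at h
        exact h
      calc (η p.2 * (θ₀ ((1 : G), p.2) * η q.2 * (θ₀ ((1 : G), p.2))⁻¹)) *
            (i p.1 * θ₀ ((1 : G), p.2) * θ₀ q)
          = η p.2 * θ₀ ((1 : G), p.2) * η q.2 * ((θ₀ ((1 : G), p.2))⁻¹ * i p.1) *
              θ₀ ((1 : G), p.2) * θ₀ q := by group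
        _ = η p.2 * θ₀ ((1 : G), p.2) * η q.2 *
              (i ((φ p.2).symm p.1) * (θ₀ ((1 : G), p.2))⁻¹) *
              θ₀ ((1 : G), p.2) * θ₀ q := by rw [hinv]
        _ = η p.2 * θ₀ ((1 : G), p.2) * (η q.2 * i ((φ p.2).symm p.1)) *
              ((θ₀ ((1 : G), p.2))⁻¹ * θ₀ ((1 : G), p.2)) * θ₀ q := by group
        _ = η p.2 * θ₀ ((1 : G), p.2) * (i ((φ p.2).symm p.1) * η q.2) *
              ((θ₀ ((1 : G), p.2))⁻¹ * θ₀ ((1 : G), p.2)) * θ₀ q := by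
            rw [(hηC q.2).2]
        _ = η p.2 * (θ₀ ((1 : G), p.2) * i ((φ p.2).symm p.1)) *
              (η q.2 * θ₀ q) := by group
        _ = η p.2 * (i p.1 * θ₀ ((1 : G), p.2)) * (η q.2 * θ₀ q) := by rw [hts]
        _ = (η p.2 * (i p.1 * θ₀ ((1 : G), p.2))) * (η q.2 * θ₀ q) := by group
    · intro a
      show η (1 : Q) * θ₀ (a, (1 : Q)) = i a
      rw [hη1, one_mul, hθ₀.2.1 a]
    · intro x
      show p' (η x.2 * θ₀ x) = θbar x.2
      have hk : p' (η x.2) = 1 := (hηC x.2).1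
      rw [map_mul, hk, one_mul, hθ₀.2.2 x]
  · -- (3)
    intro c hc θ η hθ hηC hηcr hθη
    obtain ⟨hc1, hc2⟩ := hc
    constructor
    · refine ⟨?_, ?_, ?_⟩
      · intro p q
        show c * θ (factorMul φ f p q) * c⁻¹ = (c * θ p * c⁻¹) * (c * θ q * c⁻¹)
        rw [hθ.1 p q]
        group
      · intro a
        show c * θ (a, (1 : Q)) * c⁻¹ = i a
        rw [hθ.2.1 a, hc2 a, mul_inv_cancel_right]
      · intro x
        show p' (c * θ x * c⁻¹) = θbar x.2
        have hpc : p' c = 1 := hc1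
        simp [hpc, hθ.2.2 x]
    · intro x
      have hd : InCentralizer p' i
          (θ₀ ((1 : G), x.2) * c⁻¹ * (θ₀ ((1 : G), x.2))⁻¹) :=
        conjC x.2 c⁻¹ (Cinv c ⟨hc1, hc2⟩)
      calc c * θ x * c⁻¹
          = c * (η x.2 * (i x.1 * θ₀ ((1 : G), x.2))) * c⁻¹ := by
            rw [hθη x, hsplitθ θ₀ hθ₀ x]
        _ = c * η x.2 *
              (i x.1 * (θ₀ ((1 : G), x.2) * c⁻¹ * (θ₀ ((1 : G), x.2))⁻¹)) *
              θ₀ ((1 : G), x.2) := by group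
        _ = c * η x.2 *
              ((θ₀ ((1 : G), x.2) * c⁻¹ * (θ₀ ((1 : G), x.2))⁻¹) * i x.1) *
              θ₀ ((1 : G), x.2) := by rw [← hd.2 x.1]
        _ = (c * η x.2 * (θ₀ ((1 : G), x.2) * c⁻¹ * (θ₀ ((1 : G), x.2))⁻¹)) *
              (i x.1 * θ₀ ((1 : G), x.2)) := by group
        _ = _ := by rw [← hsplitθ θ₀ hθ₀ x]
end

section
/- Let G be a topological group, W a topological space, Q a group, ρ : Q → Homeo(W) a group homomorphism into the self-homeomorphisms of W, φ̃ : Q → Aut(G) a function taking values in continuous automorphisms of G, and f : Q × Q → G, such that (φ̃, f) is a factor set for (G,Q). Suppose λ : Q → M(W,G) is a function into the continuous maps W → G satisfying, for all α,β ∈ Q and all w ∈ W: f(α,β) = φ̃(α)(λ(β)(ρ(α)⁻¹(w))) · λ(α)(w) · (λ(αβ)(w))⁻¹. Then the map θ assigning to (a,α) ∈ G ×_{(f,φ̃)} Q the self-homeomorphism of G × W given by θ(a,α)(x,w) = (a·φ̃(α)(x)·λ(α)(ρ(α)(w)), ρ(α)(w)) is a group homomorphism from G ×_{(f,φ̃)}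 Q into the group of self-homeomorphisms of G × W, and θ(a,1) = ℓ(a) for all a ∈ G. -/
/-!
Evaluating the defining identity of `λ` at `ρ(α)(ρ(β)(w))` and using (3.1) to move
`f(α,β)` past `φ̃(αβ)(x)` turns `θ(a,α) ∘ θ(b,β)` into `θ(a·φ̃(α)(b)·f(α,β), αβ)`.
At `α = β = 1` the same two identities, with `f(1,1) = 1`, force `φ̃(1) = id` and
`λ(1) = 1`, so `θ(a,1)` is left translation.
-/

namespace Seifert

variable {G W : Type*} [Group G] [TopologicalSpace G] [TopologicalSpace W]

def homeomorph [IsTopologicalGroup G] (a : G) (e : G ≃ₜ G) (c : C(W, G)) (r : W ≃ₜ W) : (G × W) ≃ₜ (G × W) where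
  toFun x := (a * e x.1 * c (r x.2), r x.2)
  invFun y := (e.symm (a⁻¹ * y.1 * (c y.2)⁻¹), r.symm y.2)
  left_inv x := by simp [mul_assoc]
  right_inv y := by simp [mul_assoc]
  continuous_toFun := by fun_prop
  continuous_invFun := by fun_prop

variable {Q : Type*} [Group Q] {φ : Q → G ≃ₜ G} {f : Q × Q → G}

theorem factorSet_mul_apply_comm
    (h31 : ∀ (α β : Q) (x : G), φ α (φ β x) = f (α, β) * φ (α * β) x * (f (α, β))⁻¹)
    (α β : Q) (x : G) : f (α, β) * φ (α * β) x = φ α (φ β x) * f (α, β) := by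
  rw [h31]
  group

theorem factorSet_apply_one
    (h31 : ∀ (α β : Q) (x : G), φ α (φ β x) = f (α, β) * φ (α * β) x * (f (α, β))⁻¹)
    (h11 : f (1, 1) = 1) (x : G) : φ 1 x = x :=
  (φ 1).injective <| by simpa [h11] using h31 1 1 x

variable {ρ : Q → W ≃ₜ W} {lam : Q → C(W, G)}

theorem factorSet_mul_lam_apply
    (hlam : ∀ (α β : Q) (w : W),
      f (α, β) = φ α (lam β ((ρ α).symm w)) * lam α w * (lam (α * β) w)⁻¹)
    (α β : Q) (v : W) :
    f (α, β) * lam (α * β) (ρ α v) = φ α (lam β v) * lam α (ρ α v) := by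
  rw [hlam α β (ρ α v), (ρ α).symm_apply_apply]
  group

theorem lam_one_apply (hρ1 : ρ 1 = Homeomorph.refl W)
    (h31 : ∀ (α β : Q) (x : G), φ α (φ β x) = f (α, β) * φ (α * β) x * (f (α, β))⁻¹)
    (h11 : f (1, 1) = 1)
    (hlam : ∀ (α β : Q) (w : W),
      f (α, β) = φ α (lam β ((ρ α).symm w)) * lam α w * (lam (α * β) w)⁻¹)
    (w : W) : lam 1 w = 1 := by
  simpa [h11, hρ1, factorSet_apply_one h31 h11] using
    (factorSet_mul_lam_apply hlam 1 1 w).symm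

end Seifert

theorem seifert_construction_homomorphism_general
    {G W Q : Type*} [Group G] [TopologicalSpace G] [IsTopologicalGroup G]
    [TopologicalSpace W] [Group Q]
    (ρ : Q → W ≃ₜ W) (hρ1 : ρ 1 = Homeomorph.refl W)
    (hρmul : ∀ α β : Q, ∀ w : W, ρ (α * β) w = ρ α (ρ β w))
    (φ : Q → G ≃ₜ G) (hφmul : ∀ (α : Q) (x y : G), φ α (x * y) = φ α x * φ α y)
    (f : Q × Q → G)
    (h31 : ∀ (α β : Q) (x : G),
      φ α (φ β x) = f (α, β) * φ (α * β) x * (f (α, β))⁻¹)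
    (h32 : ∀ α : Q, f (α, 1) = 1)
    (lam : Q → C(W, G))
    (hlam : ∀ (α β : Q) (w : W),
      f (α, β) = φ α (lam β ((ρ α).symm w)) * lam α w * (lam (α * β) w)⁻¹) :
    (∀ p : G × Q, ∃ g : (G × W) ≃ₜ (G × W),
        ⇑g = fun x : G × W =>
          (p.1 * φ p.2 x.1 * lam p.2 (ρ p.2 x.2), ρ p.2 x.2)) ∧
    (∀ p q : G × Q,
        (fun x : G × W =>
          ((p.1 * φ p.2 q.1 * f (p.2, q.2)) * φ (p.2 * q.2) x.1 *
              lam (p.2 * q.2) (ρ (p.2 * q.2) x.2),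
            ρ (p.2 * q.2) x.2)) =
        (fun x : G × W =>
          (p.1 * φ p.2 x.1 * lam p.2 (ρ p.2 x.2), ρ p.2 x.2)) ∘
        (fun x : G × W =>
          (q.1 * φ q.2 x.1 * lam q.2 (ρ q.2 x.2), ρ q.2 x.2))) ∧
    (∀ a : G,
        (fun x : G × W =>
          (a * φ (1 : Q) x.1 * lam 1 (ρ 1 x.2), ρ (1 : Q) x.2)) =
        fun x : G × W => (a * x.1, x.2)) := by
  refine ⟨fun p => ⟨Seifert.homeomorph p.1 (φ p.2) (lam p.2) (ρ p.2), rfl⟩, ?_, ?_⟩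
  · rintro ⟨a, α⟩ ⟨b, β⟩
    funext ⟨x, w⟩
    refine Prod.ext ?_ (hρmul α β w)
    calc a * φ α b * f (α, β) * φ (α * β) x * lam (α * β) (ρ (α * β) w)
        = a * φ α b * φ α (φ β x) * (f (α, β) * lam (α * β) (ρ α (ρ β w))) := by
          rw [hρmul, mul_assoc (a * φ α b), Seifert.factorSet_mul_apply_comm h31]
          group
      _ = a * φ α (b * φ β x * lam β (ρ β w)) * lam α (ρ α (ρ β w)) := by
          rw [Seifert.factorSet_mul_lam_apply hlam, hφmul, hφmul]
          group
  · intro a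
    funext ⟨x, w⟩
    simp [Seifert.factorSet_apply_one h31 (h32 1),
      Seifert.lam_one_apply hρ1 h31 (h32 1) hlam, hρ1]

/-- Given: a topological group `G`, a space `W`, a group `Q`, an action
`ρ : Q → Homeo(W)` (a group homomorphism, encoded by `ρ 1 = id` and
`ρ (α·β) = ρ α ∘ ρ β`), a function `φ̃ : Q → Aut(G)` with values in continuous
automorphisms of `G`, and `f : Q × Q → G` so that `(φ̃, f)` is a factor set;
and a map `λ : Q → M(W,G)` with
`f(α,β) = φ̃(α)(λ(β)(ρ(α)⁻¹ w)) · λ(α)(w) · (λ(αβ)(w))⁻¹` for all `w`.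
Then `θ(a,α) : (x,w) ↦ (a·φ̃(α)(x)·λ(α)(ρ(α)(w)), ρ(α)(w))` is a self-
homeomorphism of `G × W` for every `(a,α)`, the assignment
`θ : G ×_{(f,φ̃)} Q → TOP(G × W)` is a group homomorphism (it carries the
extension multiplication `(a,α)(b,β) = (a·φ̃(α)(b)·f(α,β), αβ)` to
composition), and `θ(a,1) = ℓ(a)` is left translation by `a`. -/
theorem seifert_construction_homomorphism
    {G W Q : Type*} [Group G] [TopologicalSpace G] [IsTopologicalGroup G]
    [TopologicalSpace W] [Group Q]
    (ρ : Q → W ≃ₜ W) (hρ1 : ρ 1 = Homeomorph.refl W)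
    (hρmul : ∀ α β : Q, ∀ w : W, ρ (α * β) w = ρ α (ρ β w))
    (φ : Q → G ≃ₜ G) (hφmul : ∀ (α : Q) (x y : G), φ α (x * y) = φ α x * φ α y)
    (f : Q × Q → G)
    (h31 : ∀ (α β : Q) (x : G),
      φ α (φ β x) = f (α, β) * φ (α * β) x * (f (α, β))⁻¹)
    (h32 : ∀ α : Q, f (α, 1) = 1) (h32' : ∀ β : Q, f (1, β) = 1)
    (h33 : ∀ α β γ : Q,
      f (α, β) * f (α * β, γ) = φ α (f (β, γ)) * f (α, β * γ))
    (lam : Q → C(W, G))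
    (hlam : ∀ (α β : Q) (w : W),
      f (α, β) = φ α (lam β ((ρ α).symm w)) * lam α w * (lam (α * β) w)⁻¹) :
    (∀ p : G × Q, ∃ g : (G × W) ≃ₜ (G × W),
        ⇑g = fun x : G × W =>
          (p.1 * φ p.2 x.1 * lam p.2 (ρ p.2 x.2), ρ p.2 x.2)) ∧
    (∀ p q : G × Q,
        (fun x : G × W =>
          ((p.1 * φ p.2 q.1 * f (p.2, q.2)) * φ (p.2 * q.2) x.1 *
              lam (p.2 * q.2) (ρ (p.2 * q.2) x.2),
            ρ (p.2 * q.2) x.2)) =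
        (fun x : G × W =>
          (p.1 * φ p.2 x.1 * lam p.2 (ρ p.2 x.2), ρ p.2 x.2)) ∘
        (fun x : G × W =>
          (q.1 * φ q.2 x.1 * lam q.2 (ρ q.2 x.2), ρ q.2 x.2))) ∧
    (∀ a : G,
        (fun x : G × W =>
          (a * φ (1 : Q) x.1 * lam 1 (ρ 1 x.2), ρ (1 : Q) x.2)) =
        fun x : G × W => (a * x.1, x.2)) :=
  seifert_construction_homomorphism_general ρ hρ1 hρmul φ hφmul f h31 h32 lam hlam
end

section
/- Let G be a topological group and Aff(G) = G ⋊ Aut(G) the semidirect product of G with its group of continuous automorphisms, acting on G by (a,α)·x = a·α(x). Suppose: (i) G has ULIEP, i.e., every group isomorphism between lattices of G extends uniquely to a continuous automorphism of G; and (ii) for every finite group Ψ and every homomorphism τ : Ψ → Aut(G), every τ-crossed homomorphism λ : Ψ → G (i.e., λ(ψ₁ψ₂) = λ(ψ₁)·τ(ψ₁)(λ(ψ₂))) is principal (i.e., there exists d ∈ G with λ(ψ) = d·τ(ψ)(d⁻¹) for all ψ). Let π and π' be subgroups of Aff(G) such that Γ := π ∩ G and Γ' := π' ∩ G are lattices of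 G having finite index in π and π' respectively. Then every group isomorphism θ : π → π' is conjugation by an element of Aff(G): there exists g ∈ Aff(G) with θ(x) = g·x·g⁻¹ for all x ∈ π. -/
/-- The group of continuous automorphisms of a topological group `G`
(automorphisms that are homeomorphisms), as a subgroup of `MulAut G`. -/
def ContAut (G : Type*) [Group G] [TopologicalSpace G] : Subgroup (MulAut G) where
  carrier := {α | Continuous α ∧ Continuous α.symm}
  one_mem' := ⟨continuous_id, continuous_id⟩
  mul_mem' := fun {a b} ha hb => ⟨ha.1.comp hb.1, hb.2.comp ha.2⟩
  inv_mem' := fun {a} ha => ⟨ha.2, ha.1⟩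

/-- `Aff(G) = G ⋊ Aut(G)`, with `Aut(G)` the continuous automorphisms acting
naturally on `G`; multiplication is `(a,α)(b,β) = (a·α(b), α∘β)`. -/
abbrev AffGroup (G : Type*) [Group G] [TopologicalSpace G] :=
  SemidirectProduct G (ContAut G) (ContAut G).subtype

/-- A subgroup `Γ` of a topological group `G` is a *lattice* (here: a uniform
discrete subgroup) if it is discrete and the coset space `G/Γ` is compact. -/
def IsLattice {G : Type*} [Group G] [TopologicalSpace G] (Γ : Subgroup G) : Prop :=
  DiscreteTopology Γ ∧ CompactSpace (G ⧸ Γ)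

/-!
Choose a normal subgroup `N` of finite index in `π` such that both `N` and `θ N` lie in `G`. Then
`N` and `θ N` are lattices of `G`, and by ULIEP the restriction of `θ` to `N` is conjugation by
some `α ∈ Aut(G)`; after conjugating `θ` back by `α`, it is the identity on `N`. For `x ∈ π` the
element `θ x * x⁻¹` then centralizes the lattice `N`, so the uniqueness part of ULIEP puts it in
the centralizer of `G` in `Aff(G)`, a copy of `G`. Read in that copy, `x ↦ θ x * x⁻¹` is a crossed
homomorphism of `π` factoring through the finite group `π ⧸ N`; it is principal, and a
trivializing `d` is exactly an element conjugating `θ` to the identity.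
-/

open Pointwise SemidirectProduct

namespace Subgroup

variable {G : Type*} [Group G]

lemma exists_finite_mul_eq_of_le {K L : Subgroup G} (hKL : K ≤ L) [K.IsFiniteRelIndex L] :
    ∃ T : Set G, T.Finite ∧ T * (K : Set G) = L := by
  refine ⟨Set.range fun q : L ⧸ K.subgroupOf L => ((q.out : L) : G), Set.finite_range _, ?_⟩
  apply subset_antisymm
  · rintro _ ⟨_, ⟨q, rfl⟩, k, hk, rfl⟩
    exact L.mul_mem q.out.2 (hKL hk)
  · intro l hl
    obtain ⟨k, hk⟩ := QuotientGroup.mk_out_eq_mul (K.subgroupOf L) ⟨l, hl⟩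
    refine ⟨_, ⟨(⟨l, hl⟩ : L), rfl⟩, ((k : L) : G)⁻¹, K.inv_mem k.2, ?_⟩
    simp [hk]

lemma exists_normal_finiteIndex_map_le {π π' K : Subgroup G} (hπ : K.relIndex π ≠ 0)
    (hπ' : K.relIndex π' ≠ 0) (θ : π ≃* π') :
    ∃ N : Subgroup π, N.Normal ∧ N.FiniteIndex ∧ N.map π.subtype ≤ K ∧
      (N.map (θ : π →* π')).map π'.subtype ≤ K := by
  have : (K.subgroupOf π).FiniteIndex := ⟨hπ⟩
  have : ((K.subgroupOf π').comap (θ : π →* π')).FiniteIndex :=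
    ⟨by rwa [index_comap_of_surjective _ θ.surjective]⟩
  refine ⟨(K.subgroupOf π ⊓ (K.subgroupOf π').comap (θ : π →* π')).normalCore, inferInstance,
    inferInstance, ?_, ?_⟩
  · exact map_le_iff_le_comap.mpr (normalCore_le _ |>.trans inf_le_left)
  · rw [map_le_iff_le_comap, map_le_iff_le_comap]
    exact normalCore_le _ |>.trans inf_le_right

noncomputable def comapEquivOfLERange {A : Type*} [Group A] {f : G →* A}
    (hf : Function.Injective f) {S : Subgroup A} (hS : S ≤ f.range) : S.comap f ≃* S :=
  ((S.comap f).equivMapOfInjective f hf).trans (MulEquiv.subgroupCongr (map_comap_eq_self hS))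

@[simp] lemma coe_comapEquivOfLERange {A : Type*} [Group A] {f : G →* A}
    (hf : Function.Injective f) {S : Subgroup A} (hS : S ≤ f.range) (g : S.comap f) :
    (comapEquivOfLERange hf hS g : A) = f g := rfl

lemma finite_preimage_quotientMapOfLE {K L : Subgroup G} (hKL : K ≤ L) [K.IsFiniteRelIndex L]
    (y : G ⧸ L) : (quotientMapOfLE hKL ⁻¹' {y}).Finite := by
  obtain ⟨T, hT, hTK⟩ := exists_finite_mul_eq_of_le hKL
  obtain ⟨g, rfl⟩ := QuotientGroup.mk_surjective y
  refine (hT.image fun t => (QuotientGroup.mk (g * t) : G ⧸ K)).subset fun c hc => ?_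
  obtain ⟨x, rfl⟩ := QuotientGroup.mk_surjective c
  have hgx : g⁻¹ * x ∈ (T * K : Set G) := by
    rw [hTK]; exact QuotientGroup.eq.mp (Set.mem_singleton_iff.mp hc).symm
  obtain ⟨t, ht, k, hk, htk : t * k = g⁻¹ * x⟩ := hgx
  refine ⟨t, ht, QuotientGroup.eq.mpr ?_⟩
  rwa [mul_inv_rev, mul_assoc, ← htk, inv_mul_cancel_left]

variable [TopologicalSpace G] [IsTopologicalGroup G]

lemma isClosedMap_quotientMapOfLE {K L : Subgroup G} (hKL : K ≤ L) [K.IsFiniteRelIndex L] :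
    IsClosedMap (quotientMapOfLE hKL) := by
  obtain ⟨T, hT, hTK⟩ := exists_finite_mul_eq_of_le hKL
  have hTL : ∀ t ∈ T, t ∈ L := fun t ht => by
    rw [← SetLike.mem_coe, ← hTK]; exact ⟨t, ht, 1, K.one_mem, mul_one t⟩
  intro C hC
  have hpre : QuotientGroup.mk ⁻¹' (quotientMapOfLE hKL '' C) =
      (QuotientGroup.mk ⁻¹' C : Set G) * T⁻¹ := by
    ext x
    simp only [Set.mem_preimage, Set.mem_image, Set.mem_mul, Set.mem_inv]
    constructor
    · rintro ⟨c, hc, hcx⟩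
      obtain ⟨y, rfl⟩ := QuotientGroup.mk_surjective c
      have hxy : x⁻¹ * y ∈ (T * K : Set G) := by
        rw [hTK]; exact QuotientGroup.eq.mp hcx.symm
      obtain ⟨t, ht, k, hk, htk : t * k = x⁻¹ * y⟩ := hxy
      have hxt : x * t = y * k⁻¹ := by
        rw [← mul_inv_cancel_right t k, htk]; group
      exact ⟨x * t, by rwa [hxt, QuotientGroup.mk_mul_of_mem _ (K.inv_mem hk)], t⁻¹,
        by rwa [inv_inv], by group⟩
    · rintro ⟨a, ha, t, ht, rfl⟩
      exact ⟨_, ha, QuotientGroup.eq.mpr (by simpa using L.inv_mem (hTL _ ht))⟩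
  refine (QuotientGroup.isQuotientMap_mk L).isClosed_preimage.mp ?_
  rw [hpre]
  exact (hC.preimage continuous_quot_mk).mul_right_of_isCompact hT.inv.isCompact

lemma isProperMap_quotientMapOfLE {K L : Subgroup G} (hKL : K ≤ L) [K.IsFiniteRelIndex L] :
    IsProperMap (quotientMapOfLE hKL) :=
  isProperMap_iff_isClosedMap_and_compact_fibers.mpr ⟨continuous_id.quotient_map' _,
    isClosedMap_quotientMapOfLE hKL, fun y => (finite_preimage_quotientMapOfLE hKL y).isCompact⟩

lemma compactSpace_quotient_of_le {K L : Subgroup G} [CompactSpace (G ⧸ L)] (hKL : K ≤ L)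
    [K.IsFiniteRelIndex L] : CompactSpace (G ⧸ K) :=
  isCompact_univ_iff.mp <| by
    simpa using (isProperMap_quotientMapOfLE hKL).isCompact_preimage (isCompact_univ (X := G ⧸ L))

end Subgroup

namespace IsLattice

variable {G : Type*} [Group G] [TopologicalSpace G] [IsTopologicalGroup G]

lemma of_le {K L : Subgroup G} (hL : IsLattice L) (hKL : K ≤ L) (hK : K.relIndex L ≠ 0) :
    IsLattice K := by
  obtain ⟨_, _⟩ := hL
  have : K.IsFiniteRelIndex L := ⟨hK⟩
  exact ⟨DiscreteTopology.of_subset (inferInstanceAs (DiscreteTopology (L : Set G))) hKL,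
    Subgroup.compactSpace_quotient_of_le hKL⟩

lemma comap_map_subtype {A : Type*} [Group A] {f : G →* A} {π : Subgroup A}
    (hπ : IsLattice (π.comap f)) (N : Subgroup π) [N.FiniteIndex] :
    IsLattice ((N.map π.subtype).comap f) := by
  refine hπ.of_le (Subgroup.comap_mono (Subgroup.map_subtype_le N)) ?_
  rw [Subgroup.relIndex_comap]
  refine mt (Subgroup.relIndex_eq_zero_of_le_right (Subgroup.map_comap_le _ _)) ?_
  rw [Subgroup.relIndex, Subgroup.subgroupOf,
    Subgroup.comap_map_eq_self_of_injective π.subtype_injective]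
  exact Subgroup.FiniteIndex.index_ne_zero

end IsLattice

namespace ContAut

variable {G : Type*} [Group G] [TopologicalSpace G] [ContinuousMul G]

def conj : G →* ContAut G :=
  MulAut.conj.codRestrict _ fun g =>
    ⟨(continuous_const_mul g).mul continuous_const, (continuous_const_mul g⁻¹).mul continuous_const⟩

@[simp] lemma coe_conj (g : G) : (conj g : MulAut G) = MulAut.conj g := rfl

lemma conj_map (α : ContAut G) (g : G) : conj ((α : MulAut G) g) = α * conj g * α⁻¹ := by
  ext x
  simp [MulAut.mul_apply, MulAut.conj_apply]

end ContAut

namespace AffGroup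

variable {G : Type*} [Group G] [TopologicalSpace G] [ContinuousMul G]

def conjAct (x : AffGroup G) : ContAut G := ContAut.conj x.left * x.right

lemma inl_conjAct (x : AffGroup G) (g : G) :
    inl ((conjAct x : MulAut G) g) = x * inl g * x⁻¹ := by
  ext
  · simp [conjAct, MulAut.mul_apply, MulAut.conj_apply, mul_assoc]
  · simp

/-- `rightRegular b` acts on `G` by `x ↦ x * b⁻¹`; these are the elements of `Aff(G)`
commuting with `G`. -/
def rightRegular : G →* AffGroup G where
  toFun b := ⟨b⁻¹, ContAut.conj b⟩
  map_one' := by ext <;> simp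
  map_mul' _ _ := by ext <;> simp [MulAut.conj_apply, mul_assoc]

@[simp] lemma rightRegular_left (b : G) : (rightRegular b).left = b⁻¹ := rfl

@[simp] lemma rightRegular_right (b : G) : (rightRegular b).right = ContAut.conj b := rfl

lemma rightRegular_injective : Function.Injective (rightRegular : G → AffGroup G) :=
  fun _ _ h => inv_injective (congrArg SemidirectProduct.left h)

lemma conj_rightRegular (x : AffGroup G) (b : G) :
    x * rightRegular b * x⁻¹ = rightRegular ((x.right : MulAut G) b) := by
  ext
  · simp [MulAut.conj_apply, mul_assoc]
  · simp [ContAut.conj_map, mul_assoc]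

lemma eq_rightRegular_of_conjAct_eq_one {y : AffGroup G} (hy : conjAct y = 1) :
    y = rightRegular y.left⁻¹ := by
  ext
  · simp
  · simp [eq_inv_of_mul_eq_one_right hy]

end AffGroup

open AffGroup

def HasULIEP (G : Type*) [Group G] [TopologicalSpace G] : Prop :=
  ∀ Γ₁ Γ₂ : Subgroup G, IsLattice Γ₁ → IsLattice Γ₂ →
    ∀ ψ : Γ₁ ≃* Γ₂, ∃! α : ContAut G, ∀ x : Γ₁, (α : MulAut G) (x : G) = ((ψ x : Γ₂) : G)

def HasTrivialFiniteH1 (G : Type*) [Group G] [TopologicalSpace G] : Prop :=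
  ∀ (Ψ : Type) [Group Ψ] [Finite Ψ] (τ : Ψ →* ContAut G) (lam : Ψ → G),
    (∀ ψ₁ ψ₂ : Ψ, lam (ψ₁ * ψ₂) = lam ψ₁ * (τ ψ₁ : MulAut G) (lam ψ₂)) →
    ∃ d : G, ∀ ψ : Ψ, lam ψ = d * (τ ψ : MulAut G) d⁻¹

section Rigidity

variable {G : Type*} [Group G] [TopologicalSpace G]

namespace HasULIEP

lemma eq_one_of_forall_mem (hG : HasULIEP G) {Γ : Subgroup G} (hΓ : IsLattice Γ)
    {α : ContAut G} (hα : ∀ g ∈ Γ, (α : MulAut G) g = g) : α = 1 := by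
  obtain ⟨_, -, huniq⟩ := hG Γ Γ hΓ hΓ (MulEquiv.refl Γ)
  exact (huniq α fun x => hα x x.2).trans (huniq 1 fun _ => rfl).symm

lemma exists_inr_conj_eq (hG : HasULIEP G) {S S' : Subgroup (AffGroup G)}
    (hS : S ≤ inl.range) (hS' : S' ≤ inl.range) (hΔ : IsLattice (S.comap inl))
    (hΔ' : IsLattice (S'.comap inl)) (φ : S ≃* S') :
    ∃ α : ContAut G, ∀ s : S, (φ s : AffGroup G) = inr α * (s : AffGroup G) * (inr α)⁻¹ := by
  let e := Subgroup.comapEquivOfLERange inl_injective hS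
  let e' := Subgroup.comapEquivOfLERange inl_injective hS'
  obtain ⟨α, hα, -⟩ := hG _ _ hΔ hΔ' (e.trans (φ.trans e'.symm))
  refine ⟨α, fun s => ?_⟩
  obtain ⟨g, rfl⟩ := e.surjective s
  rw [Subgroup.coe_comapEquivOfLERange, ← map_inv, ← inl_aut, Subgroup.coe_subtype, hα g]
  exact congrArg Subtype.val (e'.apply_symm_apply _).symm

lemma eq_rightRegular_of_commute [ContinuousMul G] (hG : HasULIEP G) {Δ : Subgroup G}
    (hΔ : IsLattice Δ) {y : AffGroup G} (hy : ∀ g ∈ Δ, y * inl g * y⁻¹ = inl g) :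
    y = rightRegular y.left⁻¹ :=
  eq_rightRegular_of_conjAct_eq_one <| hG.eq_one_of_forall_mem hΔ fun g hg =>
    inl_injective <| by rw [inl_conjAct, hy g hg]

end HasULIEP

namespace HasTrivialFiniteH1

lemma exists_eq {Ψ : Type*} [Group Ψ] [Finite Ψ] (hG : HasTrivialFiniteH1 G)
    (τ : Ψ →* ContAut G) (lam : Ψ → G)
    (hlam : ∀ ψ₁ ψ₂ : Ψ, lam (ψ₁ * ψ₂) = lam ψ₁ * (τ ψ₁ : MulAut G) (lam ψ₂)) :
    ∃ d : G, ∀ ψ : Ψ, lam ψ = d * (τ ψ : MulAut G) d⁻¹ := by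
  let e : Shrink.{0} Ψ ≃* Ψ := Shrink.mulEquiv
  obtain ⟨d, hd⟩ := hG (Shrink.{0} Ψ) (τ.comp e.toMonoidHom) (lam ∘ e) fun ψ₁ ψ₂ => by
    simpa using hlam (e ψ₁) (e ψ₂)
  exact ⟨d, fun ψ => by simpa using hd (e.symm ψ)⟩

lemma exists_eq_of_finiteIndex {P : Type*} [Group P] (hG : HasTrivialFiniteH1 G)
    (N : Subgroup P) [N.Normal] [N.FiniteIndex] (τ : P →* ContAut G) (hτ : N ≤ τ.ker)
    (lam : P → G) (hlam : ∀ x y : P, lam (x * y) = lam x * (τ x : MulAut G) (lam y))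
    (hlamN : ∀ n ∈ N, lam n = 1) :
    ∃ d : G, ∀ x : P, lam x = d * (τ x : MulAut G) d⁻¹ := by
  let lam' : P ⧸ N → G := fun q => q.liftOn' lam fun x y hxy => by
    rw [← mul_inv_cancel_left x y, hlam, hlamN _ (QuotientGroup.leftRel_apply.mp hxy), map_one,
      mul_one]
  obtain ⟨d, hd⟩ := hG.exists_eq (QuotientGroup.lift N τ hτ) lam' fun ψ₁ ψ₂ => by
    induction ψ₁ using QuotientGroup.induction_on
    induction ψ₂ using QuotientGroup.induction_on
    exact hlam _ _
  exact ⟨d, fun x => hd x⟩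

end HasTrivialFiniteH1

theorem exists_eq_conj_of_eqOn_normal [ContinuousMul G] (hU : HasULIEP G)
    (hH1 : HasTrivialFiniteH1 G) {π : Subgroup (AffGroup G)} (N : Subgroup π) [N.Normal]
    [N.FiniteIndex] (hN : N.map π.subtype ≤ inl.range)
    (hΔ : IsLattice ((N.map π.subtype).comap inl)) (θ : π →* AffGroup G)
    (hθ : ∀ n ∈ N, θ n = n) :
    ∃ g : AffGroup G, ∀ x : π, θ x = g * x * g⁻¹ := by
  have hcomm : ∀ x : π, ∀ g ∈ (N.map π.subtype).comap inl,
      (θ x * (x : AffGroup G)⁻¹) * inl g * (θ x * (x : AffGroup G)⁻¹)⁻¹ = inl g := by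
    rintro x g ⟨n, hn, hng⟩
    have hxn : x⁻¹ * n * x ∈ N := by simpa using Subgroup.Normal.conj_mem ‹_› n hn x⁻¹
    calc _ = θ x * θ (x⁻¹ * n * x) * (θ x)⁻¹ := by
          rw [hθ _ hxn, ← hng]
          simp only [Subgroup.coe_mul, Subgroup.coe_inv, Subgroup.coe_subtype]
          group
      _ = θ n := by simp only [map_mul, map_inv]; group
      _ = inl g := by rw [hθ n hn, ← hng]; rfl
  let c : π → G := fun x => (θ x * (x : AffGroup G)⁻¹).left⁻¹
  have hc : ∀ x : π, θ x * (x : AffGroup G)⁻¹ = rightRegular (c x) := fun x => by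
    simpa [c] using hU.eq_rightRegular_of_commute hΔ (hcomm x)
  let τ : π →* ContAut G := rightHom.comp π.subtype
  have hτx : ∀ x : π, τ x = (x : AffGroup G).right := fun _ => rfl
  have hτ : N ≤ τ.ker := fun n hn => by
    simpa [τ, range_inl_eq_ker_rightHom] using hN ⟨n, hn, rfl⟩
  have hcN : ∀ n ∈ N, c n = 1 := fun n hn => by simp [c, hθ n hn]
  have hcocycle : ∀ x y, c (x * y) = c x * (τ x : MulAut G) (c y) := fun x y =>
    rightRegular_injective <| by
      rw [map_mul, ← hc, hτx, ← conj_rightRegular, ← hc, ← hc]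
      simp only [map_mul, Subgroup.coe_mul]
      group
  obtain ⟨d, hd⟩ := hH1.exists_eq_of_finiteIndex N τ hτ c hcocycle hcN
  refine ⟨rightRegular d, fun x => ?_⟩
  calc θ x = rightRegular (c x) * x := by rw [← hc]; group
    _ = _ := by
      rw [hd, map_mul, hτx, ← conj_rightRegular, map_inv]
      group

end Rigidity

/-- Generalized Bieberbach rigidity: suppose the topological group `G` has
ULIEP (every isomorphism between lattices of `G` extends uniquely to a
continuous automorphism of `G`) and every crossed homomorphism of a finite
group into `G` (relative to any homomorphism into the continuous automorphisms)
is principal.  If `π, π' ≤ Aff(G)` are such that `Γ = π ∩ G` and `Γ' = π' ∩ G`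
are lattices of `G` of finite index in `π`, `π'` respectively, then every
isomorphism `θ : π → π'` is conjugation by an element of `Aff(G)`. -/
theorem affine_rigidity {G : Type*} [Group G] [TopologicalSpace G]
    [IsTopologicalGroup G]
    (hULIEP : ∀ Γ₁ Γ₂ : Subgroup G, IsLattice Γ₁ → IsLattice Γ₂ →
      ∀ ψ : ↥Γ₁ ≃* ↥Γ₂, ∃! α : ↥(ContAut G),
        ∀ x : ↥Γ₁, (α : MulAut G) (x : G) = ((ψ x : ↥Γ₂) : G))
    (hH1 : ∀ (Ψ : Type) [Group Ψ] [Finite Ψ] (τ : Ψ →* ↥(ContAut G))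
      (lam : Ψ → G),
      (∀ ψ₁ ψ₂ : Ψ, lam (ψ₁ * ψ₂) = lam ψ₁ * (τ ψ₁ : MulAut G) (lam ψ₂)) →
      ∃ d : G, ∀ ψ : Ψ, lam ψ = d * (τ ψ : MulAut G) d⁻¹)
    (π π' : Subgroup (AffGroup G))
    (hΓ : IsLattice (π.comap (SemidirectProduct.inl : G →* AffGroup G)))
    (hΓ' : IsLattice (π'.comap (SemidirectProduct.inl : G →* AffGroup G)))
    (hfin : (SemidirectProduct.inl : G →* AffGroup G).range.relIndex π ≠ 0)
    (hfin' : (SemidirectProduct.inl : G →* AffGroup G).range.relIndex π' ≠ 0)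
    (θ : ↥π ≃* ↥π') :
    ∃ g : AffGroup G, ∀ x : ↥π,
      ((θ x : ↥π') : AffGroup G) = g * (x : AffGroup G) * g⁻¹ := by
  obtain ⟨N, _, _, hN, hθN⟩ := Subgroup.exists_normal_finiteIndex_map_le hfin hfin' θ
  have : (N.map (θ : π →* π')).FiniteIndex :=
    ⟨by rw [Subgroup.index_map_of_bijective θ.bijective]; exact Subgroup.FiniteIndex.index_ne_zero⟩
  have hΔ := hΓ.comap_map_subtype N
  obtain ⟨α, hα⟩ := HasULIEP.exists_inr_conj_eq hULIEP hN hθN hΔ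
    (hΓ'.comap_map_subtype (N.map (θ : π →* π')))
    (((N.equivMapOfInjective _ π.subtype_injective).symm.trans (θ.subgroupMap N)).trans
      ((N.map (θ : π →* π')).equivMapOfInjective _ π'.subtype_injective))
  obtain ⟨g, hg⟩ := exists_eq_conj_of_eqOn_normal hULIEP hH1 N hN hΔ
    ((MulAut.conj (inr α)⁻¹).toMonoidHom.comp (π'.subtype.comp θ)) fun n hn => by
      have hθn : (θ n : AffGroup G) = inr α * (n : AffGroup G) * (inr α)⁻¹ := by
        simpa using hα (N.equivMapOfInjective _ π.subtype_injective ⟨n, hn⟩)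
      show (inr α)⁻¹ * (θ n : AffGroup G) * (inr α)⁻¹⁻¹ = (n : AffGroup G)
      rw [hθn]
      group
  refine ⟨inr α * g, fun x => ?_⟩
  have hgx : (inr α)⁻¹ * (θ x : AffGroup G) * inr α = g * (x : AffGroup G) * g⁻¹ := by
    simpa using hg x
  calc (θ x : AffGroup G) = inr α * ((inr α)⁻¹ * (θ x : AffGroup G) * inr α) * (inr α)⁻¹ := by
        group
    _ = inr α * g * (x : AffGroup G) * (inr α * g)⁻¹ := by rw [hgx]; group
end

section
/- Let E be a group, A a subgroup of E contained in the center of E, and p : E → E/A the quotient homomorphism. If f is an automorphism of E such that f(a) = a for all a ∈ A and p(f(x)) = p(x) for all x ∈ E, then there exists a unique group homomorphism λ : E/A → A such that f(x) = λ(p(x))·x for all x ∈ E. Conversely, for every group homomorphism λ : E/A → A, the map x ↦ λ(p(x))·x is an automorphism of E restricting to the identity on A and inducing the identity on E/A. -/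
/-- Let `A` be a central subgroup of `E` with quotient map `p : E → E/A`.
An automorphism `f` of `E` fixing `A` pointwise and inducing the identity on
`E/A` is of the form `f(x) = λ(p(x))·x` for a unique homomorphism
`λ : E/A → A`; conversely every homomorphism `λ : E/A → A` gives such an
automorphism `x ↦ λ(p(x))·x`. -/
theorem automorphisms_fixing_center_and_quotient
    {E : Type*} [Group E] (A : Subgroup E) (hA : A ≤ Subgroup.center E) :
    haveI hN : A.Normal := ⟨fun a ha g => by
      have h := (Subgroup.mem_center_iff.mp (hA ha)) g
      have hg : g * a * g⁻¹ = a := by rw [h]; group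
      rwa [hg]⟩
    (∀ f : E ≃* E, (∀ a ∈ A, f a = a) →
      (∀ x : E, (QuotientGroup.mk (f x) : E ⧸ A) = QuotientGroup.mk x) →
      ∃! lam : E ⧸ A →* ↥A,
        ∀ x : E, f x = ((lam (QuotientGroup.mk x) : ↥A) : E) * x) ∧
    (∀ lam : E ⧸ A →* ↥A,
      ∃ f : E ≃* E,
        (∀ x : E, f x = ((lam (QuotientGroup.mk x) : ↥A) : E) * x) ∧
        (∀ a ∈ A, f a = a) ∧
        (∀ x : E, (QuotientGroup.mk (f x) : E ⧸ A) = QuotientGroup.mk x)) := by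
  haveI hN : A.Normal := ⟨fun a ha g => by
    have h := (Subgroup.mem_center_iff.mp (hA ha)) g
    have hg : g * a * g⁻¹ = a := by rw [h]; group
    rwa [hg]⟩
  have hc : ∀ a ∈ A, ∀ g : E, g * a = a * g := fun a ha g =>
    (Subgroup.mem_center_iff.mp (hA ha)) g
  have hmk1 : ∀ a ∈ A, (QuotientGroup.mk a : E ⧸ A) = 1 := fun a ha =>
    (QuotientGroup.eq_one_iff a).mpr ha
  constructor
  · intro f hfA hfQ
    have hmem : ∀ x : E, x⁻¹ * f x ∈ A := by
      intro x
      have h := (QuotientGroup.eq).mp (hfQ x)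
      simpa [mul_inv_rev] using A.inv_mem h
    set g : E →* ↥A :=
      { toFun := fun x => ⟨x⁻¹ * f x, hmem x⟩
        map_one' := by ext; simp
        map_mul' := by
          intro x y
          ext
          show (x * y)⁻¹ * f (x * y) = (x⁻¹ * f x) * (y⁻¹ * f y)
          have hcx := hc _ (hmem x) y⁻¹
          rw [map_mul, mul_inv_rev]
          calc y⁻¹ * x⁻¹ * (f x * f y) = (y⁻¹ * (x⁻¹ * f x)) * f y := by group
            _ = ((x⁻¹ * f x) * y⁻¹) * f y := by rw [hcx]
            _ = (x⁻¹ * f x) * (y⁻¹ * f y) := by group } with hg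
    have hker : ∀ a ∈ A, g a = 1 := by
      intro a ha
      ext
      show a⁻¹ * f a = 1
      rw [hfA a ha]; group
    refine ⟨QuotientGroup.lift A g hker, ?_, ?_⟩
    · intro x
      show f x = (x⁻¹ * f x) * x
      have := hc _ (hmem x) x
      rw [← this]; group
    · intro lam' h'
      ext x
      show ((lam' (QuotientGroup.mk x) : ↥A) : E)
          = ((QuotientGroup.lift A g hker (QuotientGroup.mk x) : ↥A) : E)
      have h1 : ((lam' (QuotientGroup.mk x) : ↥A) : E) = x⁻¹ * f x := by
        have := h' x
        have hx : ((lam' (QuotientGroup.mk x) : ↥A) : E) = f x * x⁻¹ := by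
          rw [this]; group
        rw [hx]
        have := hc _ (hmem x) x
        calc f x * x⁻¹ = x * (x⁻¹ * f x) * x⁻¹ := by group
          _ = (x⁻¹ * f x) * x * x⁻¹ := by rw [this]
          _ = x⁻¹ * f x := by group
      have h2 : QuotientGroup.lift A g hker (QuotientGroup.mk x) = g x :=
        QuotientGroup.lift_mk A hker x
      rw [h2]
      exact h1
  · intro lam
    have hmkφ : ∀ (a : ↥A) (x : E),
        (QuotientGroup.mk ((a : E) * x) : E ⧸ A) = QuotientGroup.mk x := by
      intro a x
      rw [QuotientGroup.mk_mul, hmk1 _ a.2, one_mul]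
    refine ⟨{ toFun := fun x => ((lam (QuotientGroup.mk x) : ↥A) : E) * x
              invFun := fun x => (((lam (QuotientGroup.mk x))⁻¹ : ↥A) : E) * x
              left_inv := ?_
              right_inv := ?_
              map_mul' := ?_ }, fun x => rfl, ?_, ?_⟩
    · intro x
      simp only [hmkφ]
      calc (((lam (QuotientGroup.mk x))⁻¹ : ↥A) : E) *
            (((lam (QuotientGroup.mk x) : ↥A) : E) * x)
          = ((((lam (QuotientGroup.mk x))⁻¹ * lam (QuotientGroup.mk x)) : ↥A) : E) * x := by
            push_cast; group
        _ = x := by simp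
    · intro x
      simp only [hmkφ]
      calc ((lam (QuotientGroup.mk x) : ↥A) : E) *
            ((((lam (QuotientGroup.mk x))⁻¹ : ↥A) : E) * x)
          = (((lam (QuotientGroup.mk x) * (lam (QuotientGroup.mk x))⁻¹) : ↥A) : E) * x := by
            push_cast; group
        _ = x := by simp
    · intro x y
      show ((lam (QuotientGroup.mk (x * y)) : ↥A) : E) * (x * y)
          = (((lam (QuotientGroup.mk x) : ↥A) : E) * x) *
            (((lam (QuotientGroup.mk y) : ↥A) : E) * y)
      rw [QuotientGroup.mk_mul, map_mul]
      push_cast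
      have := hc _ (lam (QuotientGroup.mk y)).2 x
      calc ((lam (QuotientGroup.mk x) : ↥A) : E) *
            ((lam (QuotientGroup.mk y) : ↥A) : E) * (x * y)
          = ((lam (QuotientGroup.mk x) : ↥A) : E) *
            (((lam (QuotientGroup.mk y) : ↥A) : E) * x) * y := by group
        _ = ((lam (QuotientGroup.mk x) : ↥A) : E) *
            (x * ((lam (QuotientGroup.mk y) : ↥A) : E)) * y := by rw [← this]
        _ = _ := by group
    · intro a ha
      show ((lam (QuotientGroup.mk a) : ↥A) : E) * a = a
      rw [hmk1 a ha, map_one]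
      simp
    · intro x
      exact hmkφ _ x
end
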